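/- arXiv:2104.11565 — 8 statements merged into one kernel-verified Lean document; each statement's English description precedes it below -/
import Mathlib

section
/- Assume P is eventually positive, has SRLP with ratio-limit kernel H, and has Gerl's ratio limit property with spectral radius ρ > 0. Then for every fixed y ∈ G the function x ↦ H(x,y) is ρ-harmonic: for all x, y ∈ G, ∑_{g : μ(g) ≠ 0} μ(g)·H(xg, y) = ρ·H(x,y) (a finite sum over the support of μ). -/
open Filter Topology
open scoped Classical

/-- for every fixed y, the function x ↦ H(x,y) is ρ-harmonic. -/
theorem stmt2 {G : Type*} [Group G] [Countable G]
(μ : G → ℝ) (hμnn : ∀ g : G, 0 ≤ μ g)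
    (hμfin : (Function.support μ).Finite)
    (hμgen : Subsemigroup.closure (Function.support μ) = ⊤)
    (hμsum : ∑ᶠ g : G, μ g = 1)
    (ν : ℕ → G → ℝ)
    (hν0 : ∀ x : G, ν 0 x = if x = 1 then 1 else 0)
    (hνs : ∀ (m : ℕ) (x : G), ν (m + 1) x = ∑ᶠ g : G, ν m g * μ (g⁻¹ * x))
(hev : ∀ y : G, ∃ m₀ : ℕ, ∀ m ≥ m₀, 0 < ν m y)
(H : G → G → ℝ)
    (hH : ∀ x y : G, Tendsto (fun m : ℕ => ν m (x⁻¹ * y) / ν m y) atTop (𝓝 (H x y)))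
    (hHpos : ∀ x y : G, 0 < H x y)
(ρ : ℝ) (hρ : 0 < ρ)
    (hGerl : ∀ w : G, Tendsto (fun m : ℕ => ν (m + 1) w / ν m w) atTop (𝓝 ρ)) :
    ∀ x y : G, ∑ᶠ g : G, μ g * H (x * g) y = ρ * H x y := by
  classical
  set S : Finset G := hμfin.toFinset with hSdef
  have hSmem : ∀ g : G, g ∈ S ↔ μ g ≠ 0 := by
    intro g; simp [hSdef, Function.mem_support]
  -- nonnegativity of ν m
  have hνnn : ∀ m (x : G), 0 ≤ ν m x := by
    intro m
    induction m with
    | zero => intro x; rw [hν0]; split <;> norm_num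
    | succ m ih =>
      intro x
      rw [hνs]
      exact finsum_nonneg fun g => mul_nonneg (ih g) (hμnn _)
  -- finite support of ν m
  have hνfin : ∀ m, (Function.support (ν m)).Finite := by
    intro m
    induction m with
    | zero =>
      refine Set.Finite.subset (Set.finite_singleton (1 : G)) ?_
      intro x hx
      rw [Function.mem_support, hν0] at hx
      by_contra h
      exact hx (if_neg (by simpa using h))
    | succ m ih =>
      refine Set.Finite.subset (ih.mul hμfin) ?_
      intro x hx
      rw [Function.mem_support, hνs] at hx
      by_contra hnot
      apply hx
      apply finsum_eq_zero_of_forall_eq_zero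
      intro g
      by_contra hg
      apply hnot
      have h1 : ν m g ≠ 0 := fun h => hg (by simp [h])
      have h2 : μ (g⁻¹ * x) ≠ 0 := fun h => hg (by simp [h])
      have : x = g * (g⁻¹ * x) := by group
      rw [this]
      exact Set.mul_mem_mul h1 h2
  -- recursion as a finset sum
  have hrec : ∀ m (x : G),
      ν (m + 1) x = ∑ h ∈ (hνfin m).toFinset, ν m h * μ (h⁻¹ * x) := by
    intro m x
    rw [hνs]
    apply finsum_eq_finset_sum_of_support_subset
    intro g hg
    have : ν m g ≠ 0 := fun h => hg (by simp [Function.mem_support, h])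
    simpa [Set.Finite.coe_toFinset, Function.mem_support] using this
  -- the commuted convolution identity
  have hconv : ∀ m (x : G), ν (m + 1) x = ∑ g ∈ S, μ g * ν m (g⁻¹ * x) := by
    intro m
    induction m with
    | zero =>
      intro x
      have h1 : ν 1 x = μ x := by
        rw [hνs]
        rw [finsum_eq_single _ (1 : G)]
        · simp [hν0]
        · intro g hg; rw [hν0, if_neg hg, zero_mul]
      rw [h1]
      have h2 : ∀ g : G, μ g * ν 0 (g⁻¹ * x) = if g = x then μ x else 0 := by
        intro g
        rcases eq_or_ne g x with rfl | h
        · simp [hν0]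
        · have : g⁻¹ * x ≠ 1 := by
            rw [Ne, inv_mul_eq_one]; exact h
          rw [hν0, if_neg this, mul_zero, if_neg h]
      rw [show (∑ g ∈ S, μ g * ν 0 (g⁻¹ * x)) = ∑ g ∈ S, if g = x then μ x else 0 from
        Finset.sum_congr rfl fun g _ => h2 g]
      rw [Finset.sum_ite_eq' S x fun _ => μ x]
      split_ifs with hxS
      · rfl
      · have : μ x = 0 := by
          by_contra h; exact hxS ((hSmem x).2 h)
        exact this
    | succ m ih =>
      intro x
      rw [hrec (m + 1) x]
      have step1 : ∀ h ∈ (hνfin (m + 1)).toFinset,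
          ν (m + 1) h * μ (h⁻¹ * x) = ∑ g ∈ S, μ g * ν m (g⁻¹ * h) * μ (h⁻¹ * x) := by
        intro h _
        rw [ih h, Finset.sum_mul]
      rw [Finset.sum_congr rfl step1, Finset.sum_comm]
      refine Finset.sum_congr rfl fun g hg => ?_
      have hgS : μ g ≠ 0 := (hSmem g).1 hg
      have hgpos : 0 < μ g := lt_of_le_of_ne (hμnn g) (Ne.symm hgS)
      -- inner sum: extend to a finsum and reindex
      have hsupp : (Function.support fun h => ν m (g⁻¹ * h) * μ (h⁻¹ * x)) ⊆
          ((hνfin (m + 1)).toFinset : Set G) := by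
        intro h hh
        rw [Function.mem_support] at hh
        have h1 : ν m (g⁻¹ * h) ≠ 0 := fun h0 => hh (by simp [h0])
        have h1pos : 0 < ν m (g⁻¹ * h) := lt_of_le_of_ne (hνnn m _) (Ne.symm h1)
        have hpos : 0 < ν (m + 1) h := by
          rw [ih h]
          have hterm : 0 < μ g * ν m (g⁻¹ * h) := mul_pos hgpos h1pos
          refine lt_of_lt_of_le hterm ?_
          exact Finset.single_le_sum (f := fun i => μ i * ν m (i⁻¹ * h))
            (fun i _ => mul_nonneg (hμnn i) (hνnn m _)) hg
        simp [Set.Finite.mem_toFinset, Function.mem_support, ne_of_gt hpos]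
      have e1 : (∑ h ∈ (hνfin (m + 1)).toFinset, μ g * ν m (g⁻¹ * h) * μ (h⁻¹ * x))
          = μ g * ∑ h ∈ (hνfin (m + 1)).toFinset, ν m (g⁻¹ * h) * μ (h⁻¹ * x) := by
        rw [Finset.mul_sum]
        exact Finset.sum_congr rfl fun h _ => by ring
      rw [e1]
      congr 1
      rw [← finsum_eq_finset_sum_of_support_subset _ hsupp]
      have e2 : (∑ᶠ h : G, ν m (g⁻¹ * h) * μ (h⁻¹ * x))
          = ∑ᶠ k : G, ν m k * μ (k⁻¹ * (g⁻¹ * x)) := by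
        refine (finsum_eq_of_bijective (fun k : G => g * k)
          (Group.mulLeft_bijective g) ?_).symm
        intro k
        congr 2
        · group
        · group
      rw [e2, ← hνs]
  -- pass to the limit
  intro x y
  set w : G := x⁻¹ * y with hwdef
  obtain ⟨m₁, hm₁⟩ := hev w
  -- the two sequences
  have key : ∀ m : ℕ, ν (m + 1) w / ν m y
      = ∑ g ∈ S, μ g * (ν m ((x * g)⁻¹ * y) / ν m y) := by
    intro m
    rw [hconv m w, Finset.sum_div]
    refine Finset.sum_congr rfl fun g _ => ?_
    rw [mul_div_assoc]
    congr 2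
    rw [hwdef]
    group
  -- limit of LHS
  have hL : Tendsto (fun m : ℕ => ν (m + 1) w / ν m y) atTop (𝓝 (ρ * H x y)) := by
    have h1 : Tendsto (fun m : ℕ => (ν (m + 1) w / ν m w) * (ν m w / ν m y)) atTop
        (𝓝 (ρ * H x y)) := (hGerl w).mul (hH x y)
    refine h1.congr' ?_
    filter_upwards [eventually_atTop.2 ⟨m₁, hm₁⟩] with m hm
    have hne : ν m w ≠ 0 := ne_of_gt hm
    field_simp
  -- limit of RHS
  have hR : Tendsto (fun m : ℕ => ∑ g ∈ S, μ g * (ν m ((x * g)⁻¹ * y) / ν m y)) atTop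
      (𝓝 (∑ g ∈ S, μ g * H (x * g) y)) := by
    refine tendsto_finset_sum S fun g _ => ?_
    exact (hH (x * g) y).const_mul (μ g)
  have heq : (∑ g ∈ S, μ g * H (x * g) y) = ρ * H x y := by
    refine tendsto_nhds_unique ?_ hL
    refine hR.congr fun m => (key m).symm
  rw [← heq]
  apply finsum_eq_finset_sum_of_support_subset
  intro g hg
  have : μ g ≠ 0 := fun h => hg (by simp [Function.mem_support, h])
  simpa [hSmem] using this
end

section
/- Assume P is eventually positive and has SRLP with ratio-limit kernel H. Then the ratio-limit radical R_μ := {y ∈ G : H(x,y) = H(x,e) for all x ∈ G} is a subgroup of G: it contains e, and for all y, z ∈ R_μ one has y·z ∈ R_μ and y⁻¹ ∈ R_μ. -/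
/-!
Writing `F a := H a 1`, the limit of `ν (x⁻¹ y) / ν y = (ν (x⁻¹ y) / ν 1) / (ν y / ν 1)` gives
`H x y = F (y⁻¹ x) / F y⁻¹`. Hence `y` lies in the radical iff `F (y⁻¹ x) = F y⁻¹ * F x` for all `x`,
and the elements `g` with `F (g x) = F g * F x` for all `x` form a subgroup as soon as `F` does not
vanish and `F 1 = 1`.
-/

open Filter Topology
open scoped Classical

/-- The ratio-limit radical of the ratio-limit kernel H. -/
def ratioLimitRadical {G : Type*} [Group G] (H : G → G → ℝ) : Set G :=
  {y : G | ∀ x : G, H x y = H x 1}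

theorem Filter.Tendsto.eventually_ne_zero_of_div_self {α 𝕜 : Type*} [DivisionRing 𝕜]
    [TopologicalSpace 𝕜] [T1Space 𝕜] {l : Filter α} {u : α → 𝕜} {c : 𝕜}
    (h : Tendsto (fun m => u m / u m) l (𝓝 c)) (hc : c ≠ 0) : ∀ᶠ m in l, u m ≠ 0 :=
  (h.eventually_ne hc).mono fun m hm hu => hm (by rw [hu, div_zero])

def multiplicativitySubgroup {G M₀ : Type*} [Group G] [GroupWithZero M₀] (F : G → M₀)
    (hF0 : ∀ g, F g ≠ 0) (hF1 : F 1 = 1) : Subgroup G where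
  carrier := {g | ∀ x, F (g * x) = F g * F x}
  one_mem' x := by rw [one_mul, hF1, one_mul]
  mul_mem' {g h} hg hh x := by rw [mul_assoc, hg, hh, hg h, mul_assoc]
  inv_mem' {g} hg x := by
    have hx : F g * F (g⁻¹ * x) = F x := by rw [← hg, mul_inv_cancel_left]
    have h1 : F g * F g⁻¹ = 1 := by rw [← hg, mul_inv_cancel, hF1]
    refine mul_left_cancel₀ (hF0 g) ?_
    rw [hx, ← mul_assoc, h1, one_mul]

section RatioLimit

variable {α G : Type*} [Group G] {l : Filter α} [l.NeBot] {ν : α → G → ℝ} {H : G → G → ℝ}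

theorem ratioLimit_eq_div
    (hH : ∀ x y, Tendsto (fun m => ν m (x⁻¹ * y) / ν m y) l (𝓝 (H x y)))
    (hH0 : ∀ x y, H x y ≠ 0) (x y : G) : H x y = H (y⁻¹ * x) 1 / H y⁻¹ 1 := by
  -- Since `0 / 0 = 0`, the limit `ν m a / ν m a → H 1 a ≠ 0` forces `ν m a ≠ 0` eventually.
  have hν : ∀ a, ∀ᶠ m in l, ν m a ≠ 0 := fun a =>
    Tendsto.eventually_ne_zero_of_div_self (by simpa using hH 1 a) (hH0 1 a)
  have hlim : ∀ a, Tendsto (fun m => ν m a / ν m 1) l (𝓝 (H a⁻¹ 1)) := fun a => by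
    simpa using hH a⁻¹ 1
  have hquot := (hlim (x⁻¹ * y)).div (hlim y) (hH0 y⁻¹ 1)
  rw [mul_inv_rev, inv_inv] at hquot
  refine tendsto_nhds_unique (hH x y) (hquot.congr' ?_)
  filter_upwards [hν 1, hν y] with m h1 hy
  simp only [Pi.div_apply]
  field_simp

theorem ratioLimit_one_one_eq_one
    (hH : ∀ x y, Tendsto (fun m => ν m (x⁻¹ * y) / ν m y) l (𝓝 (H x y)))
    (hH0 : ∀ x y, H x y ≠ 0) : H 1 1 = 1 := by
  have h := ratioLimit_eq_div hH hH0 1 1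
  rwa [inv_one, one_mul, eq_div_iff (hH0 1 1), mul_eq_left₀ (hH0 1 1)] at h

theorem ratioLimitRadical_eq_multiplicativitySubgroup
    (hH : ∀ x y, Tendsto (fun m => ν m (x⁻¹ * y) / ν m y) l (𝓝 (H x y)))
    (hH0 : ∀ x y, H x y ≠ 0) :
    ratioLimitRadical H =
      multiplicativitySubgroup (fun a => H a 1) (fun a => hH0 a 1) (ratioLimit_one_one_eq_one hH hH0) := by
  ext y
  rw [SetLike.mem_coe, ← Subgroup.inv_mem_iff]
  refine forall_congr' fun x => ?_
  rw [ratioLimit_eq_div hH hH0 x y, ratioLimit_eq_div hH hH0 x 1, inv_one, one_mul,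
    ratioLimit_one_one_eq_one hH hH0, div_one, div_eq_iff (hH0 _ 1), mul_comm (H x 1)]

end RatioLimit

theorem stmt4_general {G : Type*} [Group G]
    (ν : ℕ → G → ℝ)
(H : G → G → ℝ)
    (hH : ∀ x y : G, Tendsto (fun m : ℕ => ν m (x⁻¹ * y) / ν m y) atTop (𝓝 (H x y)))
    (hHpos : ∀ x y : G, 0 < H x y) :
    (1 : G) ∈ ratioLimitRadical H ∧
      ∀ y z : G, y ∈ ratioLimitRadical H → z ∈ ratioLimitRadical H →
        y * z ∈ ratioLimitRadical H ∧ y⁻¹ ∈ ratioLimitRadical H := by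
  rw [ratioLimitRadical_eq_multiplicativitySubgroup hH fun x y => (hHpos x y).ne']
  exact ⟨one_mem _, fun y z hy hz => ⟨mul_mem hy hz, inv_mem hy⟩⟩

/-- the ratio-limit radical is a subgroup of G. -/
theorem stmt4 {G : Type*} [Group G] [Countable G]
(μ : G → ℝ) (hμnn : ∀ g : G, 0 ≤ μ g)
    (hμfin : (Function.support μ).Finite)
    (hμgen : Subsemigroup.closure (Function.support μ) = ⊤)
    (hμsum : ∑ᶠ g : G, μ g = 1)
    (ν : ℕ → G → ℝ)
    (hν0 : ∀ x : G, ν 0 x = if x = 1 then 1 else 0)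
    (hνs : ∀ (m : ℕ) (x : G), ν (m + 1) x = ∑ᶠ g : G, ν m g * μ (g⁻¹ * x))
(hev : ∀ y : G, ∃ m₀ : ℕ, ∀ m ≥ m₀, 0 < ν m y)
(H : G → G → ℝ)
    (hH : ∀ x y : G, Tendsto (fun m : ℕ => ν m (x⁻¹ * y) / ν m y) atTop (𝓝 (H x y)))
    (hHpos : ∀ x y : G, 0 < H x y) :
    (1 : G) ∈ ratioLimitRadical H ∧
      ∀ y z : G, y ∈ ratioLimitRadical H → z ∈ ratioLimitRadical H →
        y * z ∈ ratioLimitRadical H ∧ y⁻¹ ∈ ratioLimitRadical H :=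
  stmt4_general ν H hH hHpos
end

section
/- Assume P is eventually positive and has SRLP with ratio-limit kernel H. Then the ratio-limit functions separate the left cosets of the ratio-limit radical: for all y, z ∈ G, H(x,y) = H(x,z) for every x ∈ G if and only if y⁻¹z ∈ R_μ. -/
open Filter Topology
open scoped Classical

/-- the ratio-limit functions separate the left cosets of the radical. -/
theorem stmt5 {G : Type*} [Group G] [Countable G]
(μ : G → ℝ) (hμnn : ∀ g : G, 0 ≤ μ g)
    (hμfin : (Function.support μ).Finite)
    (hμgen : Subsemigroup.closure (Function.support μ) = ⊤)
    (hμsum : ∑ᶠ g : G, μ g = 1)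
    (ν : ℕ → G → ℝ)
    (hν0 : ∀ x : G, ν 0 x = if x = 1 then 1 else 0)
    (hνs : ∀ (m : ℕ) (x : G), ν (m + 1) x = ∑ᶠ g : G, ν m g * μ (g⁻¹ * x))
(hev : ∀ y : G, ∃ m₀ : ℕ, ∀ m ≥ m₀, 0 < ν m y)
(H : G → G → ℝ)
    (hH : ∀ x y : G, Tendsto (fun m : ℕ => ν m (x⁻¹ * y) / ν m y) atTop (𝓝 (H x y)))
    (hHpos : ∀ x y : G, 0 < H x y) :
    ∀ y z : G, (∀ x : G, H x y = H x z) ↔ y⁻¹ * z ∈ ratioLimitRadical H := by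
  -- Key identity: H x y * H y⁻¹ 1 = H (y⁻¹ * x) 1
  have key : ∀ x y : G, H x y * H y⁻¹ 1 = H (y⁻¹ * x) 1 := by
    intro x y
    have h1 := hH (y⁻¹ * x) 1
    have h2 := hH y⁻¹ 1
    have h3 := hH x y
    simp only [mul_inv_rev, inv_inv, mul_one] at h1 h2
    -- h1 : ν m (x⁻¹ * y) / ν m 1 → H (y⁻¹*x) 1
    -- h2 : ν m y / ν m 1 → H y⁻¹ 1
    have hmul := h3.mul h2
    have heq : (fun m => ν m (x⁻¹ * y) / ν m y * (ν m y / ν m 1)) =ᶠ[atTop]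
        (fun m => ν m (x⁻¹ * y) / ν m 1) := by
      obtain ⟨m₀, hm₀⟩ := hev y
      obtain ⟨m₁, hm₁⟩ := hev 1
      filter_upwards [eventually_ge_atTop m₀, eventually_ge_atTop m₁] with m hm hm'
      have hy := (hm₀ m hm).ne'
      have h1' := (hm₁ m hm').ne'
      field_simp
    exact tendsto_nhds_unique (hmul.congr' heq) h1
  have hF1 : H 1 1 = 1 := by
    have h := hH 1 1
    have heq : (fun m => ν m ((1 : G)⁻¹ * 1) / ν m 1) =ᶠ[atTop] (fun _ => (1 : ℝ)) := by
      obtain ⟨m₁, hm₁⟩ := hev 1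
      filter_upwards [eventually_ge_atTop m₁] with m hm
      simp [div_self (hm₁ m hm).ne']
    exact tendsto_nhds_unique (h.congr' heq) tendsto_const_nhds
  -- H x 1 = F x where F x = H x 1 ; key with y = 1 : H x 1 * H 1 1 = H x 1 (consistent)
  intro y z
  set F : G → ℝ := fun x => H x 1 with hFdef
  have hFpos : ∀ x, 0 < F x := fun x => hHpos x 1
  -- H x y expressed via F
  have hrep : ∀ x w : G, H x w * F w⁻¹ = F (w⁻¹ * x) := fun x w => key x w
  constructor
  · intro h
    intro x
    -- goal : H x (y⁻¹ * z) = H x 1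
    have hx : ∀ x : G, F (y⁻¹ * x) * F z⁻¹ = F (z⁻¹ * x) * F y⁻¹ := by
      intro x
      have e1 := hrep x y
      have e2 := hrep x z
      rw [← e1, ← e2, h x]; ring
    have hbase := hx y
    simp only [inv_mul_cancel] at hbase
    -- hbase : F 1 * F z⁻¹ = F (z⁻¹ * y) * F y⁻¹
    have hF1' : F 1 = 1 := hF1
    rw [hF1', one_mul] at hbase
    have hx' := hx (y * x)
    rw [inv_mul_cancel_left] at hx'
    -- hx' : F x * F z⁻¹ = F (z⁻¹ * (y * x)) * F y⁻¹
    have e3 := hrep x (y⁻¹ * z)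
    simp only [mul_inv_rev, inv_inv] at e3
    rw [mul_assoc] at e3
    -- e3 : H x (y⁻¹*z) * F (z⁻¹ * y) = F (z⁻¹ * (y * x))
    have hne := (hFpos (z⁻¹ * y)).ne'
    have hne2 := (hFpos y⁻¹).ne'
    have step : H x (y⁻¹ * z) * F (z⁻¹ * y) * F y⁻¹ = F x * F (z⁻¹ * y) * F y⁻¹ := by
      calc H x (y⁻¹ * z) * F (z⁻¹ * y) * F y⁻¹
          = F (z⁻¹ * (y * x)) * F y⁻¹ := by rw [e3]
        _ = F x * F z⁻¹ := hx'.symm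
        _ = F x * (F (z⁻¹ * y) * F y⁻¹) := by rw [hbase]
        _ = F x * F (z⁻¹ * y) * F y⁻¹ := by ring
    exact mul_right_cancel₀ hne (mul_right_cancel₀ hne2 step)
  · intro h x
    -- h : ∀ x, H x (y⁻¹*z) = H x 1 = F x
    have hzyx : ∀ x : G, F (z⁻¹ * y * x) = F x * F (z⁻¹ * y) := by
      intro x
      have e3 := hrep x (y⁻¹ * z)
      simp only [mul_inv_rev, inv_inv] at e3
      rw [h x] at e3
      linarith [e3]
    have hbase : F z⁻¹ = F y⁻¹ * F (z⁻¹ * y) := by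
      have := hzyx y⁻¹
      rwa [mul_assoc, mul_inv_cancel, mul_one] at this
    have hzx : ∀ x : G, F (z⁻¹ * x) = F (y⁻¹ * x) * F (z⁻¹ * y) := by
      intro x
      have := hzyx (y⁻¹ * x)
      rwa [mul_assoc, mul_inv_cancel_left] at this
    have e1 := hrep x y
    have e2 := hrep x z
    rw [hzx x, hbase] at e2
    -- e2 : H x z * (F y⁻¹ * F (z⁻¹*y)) = F (y⁻¹*x) * F (z⁻¹*y)
    have hne := (hFpos (z⁻¹ * y)).ne'
    have hne2 := (hFpos y⁻¹).ne'
    have : H x z * F y⁻¹ = F (y⁻¹ * x) := by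
      have := mul_right_cancel₀ hne (by linarith [e2] : H x z * F y⁻¹ * F (z⁻¹ * y) = F (y⁻¹ * x) * F (z⁻¹ * y))
      exact this
    rw [← e1] at this
    exact (mul_right_cancel₀ hne2 this).symm
end

section
/- Assume μ is symmetric (μ(g) = μ(g⁻¹) for all g ∈ G), P is eventually positive, and P has SRLP with ratio-limit kernel H. Then every element of the ratio-limit radical lies in the subgroup A_μ: for every y ∈ R_μ, the ratios μ^{*m}(y)/μ^{*m}(e) converge to 1 as m → ∞. -/
open Filter Topology
open scoped Classical

section Aux

variable {G : Type*} [Group G]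

lemma supp_fin_aux (μ : G → ℝ) (hμfin : (Function.support μ).Finite)
    (ν : ℕ → G → ℝ)
    (hν0 : ∀ x : G, ν 0 x = if x = 1 then 1 else 0)
    (hνs : ∀ (m : ℕ) (x : G), ν (m + 1) x = ∑ᶠ g : G, ν m g * μ (g⁻¹ * x)) :
    ∀ m, (Function.support (ν m)).Finite := by
  intro m
  induction m with
  | zero =>
    apply Set.Finite.subset (Set.finite_singleton (1 : G))
    intro x hx
    by_contra h
    simp only [Set.mem_singleton_iff] at h
    simp [Function.mem_support, hν0, h] at hx
  | succ m ih =>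
    apply Set.Finite.subset (Set.Finite.image2 (· * ·) ih hμfin)
    intro x hx
    simp only [Function.mem_support, hνs] at hx
    have : ∃ g : G, ν m g * μ (g⁻¹ * x) ≠ 0 := by
      by_contra h
      push_neg at h
      exact hx (finsum_eq_zero_of_forall_eq_zero h)
    obtain ⟨g, hg⟩ := this
    have h1 : ν m g ≠ 0 := fun h => hg (by simp [h])
    have h2 : μ (g⁻¹ * x) ≠ 0 := fun h => hg (by simp [h])
    exact ⟨g, h1, g⁻¹ * x, h2, by group⟩

lemma left_conv_aux (μ : G → ℝ) (hμfin : (Function.support μ).Finite)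
    (ν : ℕ → G → ℝ)
    (hν0 : ∀ x : G, ν 0 x = if x = 1 then 1 else 0)
    (hνs : ∀ (m : ℕ) (x : G), ν (m + 1) x = ∑ᶠ g : G, ν m g * μ (g⁻¹ * x)) :
    ∀ (m : ℕ) (x : G), ν (m + 1) x = ∑ᶠ g : G, μ g * ν m (g⁻¹ * x) := by
  have hfin := supp_fin_aux μ hμfin ν hν0 hνs
  intro m
  induction m with
  | zero =>
    intro x
    rw [hνs]
    rw [finsum_eq_single (fun g : G => ν 0 g * μ (g⁻¹ * x)) 1
      (by intro g hg; simp [hν0, hg])]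
    rw [finsum_eq_single (fun g : G => μ g * ν 0 (g⁻¹ * x)) x
      (by intro g hg
          have : g⁻¹ * x ≠ 1 := fun h0 => hg (inv_mul_eq_one.mp h0)
          simp [hν0, this])]
    simp [hν0]
  | succ m ih =>
    intro x
    -- big finset containing all relevant supports
    set T : Finset G := hμfin.toFinset with hT
    have hBfin : (Function.support (ν (m + 1)) ∪
        Set.image2 (· * ·) (Function.support μ) (Function.support (ν m))).Finite :=
      (hfin (m + 1)).union (Set.Finite.image2 _ hμfin (hfin m))
    set B : Finset G := hBfin.toFinset with hB
    have hsub1 : Function.support (fun g : G => ν (m + 1) g * μ (g⁻¹ * x)) ⊆ (B : Set G) := by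
      intro g hg
      simp only [Function.mem_support] at hg
      have : ν (m + 1) g ≠ 0 := fun h => hg (by simp [h])
      simp only [hB, Set.Finite.coe_toFinset]
      exact Or.inl this
    rw [hνs, finsum_eq_sum_of_support_subset _ hsub1]
    have step1 : ∀ g : G, ν (m + 1) g * μ (g⁻¹ * x)
        = ∑ h ∈ T, μ h * ν m (h⁻¹ * g) * μ (g⁻¹ * x) := by
      intro g
      rw [ih g]
      rw [finsum_eq_sum_of_support_subset (fun h : G => μ h * ν m (h⁻¹ * g)) (s := T)
        (by intro h hh
            simp only [Function.mem_support] at hh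
            have : μ h ≠ 0 := fun h0 => hh (by simp [h0])
            simpa [hT] using this)]
      rw [Finset.sum_mul]
    calc ∑ g ∈ B, ν (m + 1) g * μ (g⁻¹ * x)
        = ∑ g ∈ B, ∑ h ∈ T, μ h * ν m (h⁻¹ * g) * μ (g⁻¹ * x) := by
          exact Finset.sum_congr rfl fun g _ => step1 g
      _ = ∑ h ∈ T, ∑ g ∈ B, μ h * (ν m (h⁻¹ * g) * μ (g⁻¹ * x)) := by
          rw [Finset.sum_comm]
          exact Finset.sum_congr rfl fun h _ => Finset.sum_congr rfl fun g _ => mul_assoc _ _ _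
      _ = ∑ h ∈ T, μ h * ∑ g ∈ B, ν m (h⁻¹ * g) * μ (g⁻¹ * x) := by
          exact Finset.sum_congr rfl fun h _ => (Finset.mul_sum _ _ _).symm
      _ = ∑ h ∈ T, μ h * ν (m + 1) (h⁻¹ * x) := by
          refine Finset.sum_congr rfl fun h hh => ?_
          congr 1
          have hhμ : μ h ≠ 0 := by simpa [hT] using hh
          have hsub2 : Function.support (fun g : G => ν m (h⁻¹ * g) * μ (g⁻¹ * x))
              ⊆ (B : Set G) := by
            intro g hg
            simp only [Function.mem_support] at hg
            have h1 : ν m (h⁻¹ * g) ≠ 0 := fun h0 => hg (by simp [h0])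
            simp only [hB, Set.Finite.coe_toFinset]
            exact Or.inr ⟨h, hhμ, h⁻¹ * g, h1, by group⟩
          rw [← finsum_eq_sum_of_support_subset _ hsub2]
          rw [hνs]
          rw [← finsum_comp_equiv (Equiv.mulLeft h)
            (f := fun g : G => ν m (h⁻¹ * g) * μ (g⁻¹ * x))]
          apply finsum_congr
          intro g
          simp only [Equiv.coe_mulLeft]
          congr 2
          · group
          · group
      _ = ∑ᶠ h : G, μ h * ν (m + 1) (h⁻¹ * x) := by
          rw [finsum_eq_sum_of_support_subset (fun h : G => μ h * ν (m + 1) (h⁻¹ * x)) (s := T)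
            (by intro h hh
                simp only [Function.mem_support] at hh
                have : μ h ≠ 0 := fun h0 => hh (by simp [h0])
                simpa [hT] using this)]

lemma nu_symm_aux (μ : G → ℝ) (hμfin : (Function.support μ).Finite)
    (ν : ℕ → G → ℝ)
    (hν0 : ∀ x : G, ν 0 x = if x = 1 then 1 else 0)
    (hνs : ∀ (m : ℕ) (x : G), ν (m + 1) x = ∑ᶠ g : G, ν m g * μ (g⁻¹ * x))
    (hsym : ∀ g : G, μ g = μ g⁻¹) :
    ∀ (m : ℕ) (x : G), ν m x = ν m x⁻¹ := by
  have hlc := left_conv_aux μ hμfin ν hν0 hνs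
  intro m
  induction m with
  | zero =>
    intro x
    simp only [hν0, inv_eq_one]
  | succ m ih =>
    intro x
    rw [hνs m x⁻¹, hlc m x]
    rw [← finsum_comp_equiv (Equiv.mulLeft x⁻¹) (f := fun g : G => ν m g * μ (g⁻¹ * x⁻¹))]
    apply finsum_congr
    intro h
    simp only [Equiv.coe_mulLeft]
    rw [ih (x⁻¹ * h), mul_comm]
    rw [hsym ((x⁻¹ * h)⁻¹ * x⁻¹)]
    congr 2
    · group
    · group

end Aux

/-- for symmetric μ, every element of the ratio-limit radical lies in A_μ. -/
theorem stmt6 {G : Type*} [Group G] [Countable G]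
(μ : G → ℝ) (hμnn : ∀ g : G, 0 ≤ μ g)
    (hμfin : (Function.support μ).Finite)
    (hμgen : Subsemigroup.closure (Function.support μ) = ⊤)
    (hμsum : ∑ᶠ g : G, μ g = 1)
    (ν : ℕ → G → ℝ)
    (hν0 : ∀ x : G, ν 0 x = if x = 1 then 1 else 0)
    (hνs : ∀ (m : ℕ) (x : G), ν (m + 1) x = ∑ᶠ g : G, ν m g * μ (g⁻¹ * x))
    (hsym : ∀ g : G, μ g = μ g⁻¹)
(hev : ∀ y : G, ∃ m₀ : ℕ, ∀ m ≥ m₀, 0 < ν m y)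
(H : G → G → ℝ)
    (hH : ∀ x y : G, Tendsto (fun m : ℕ => ν m (x⁻¹ * y) / ν m y) atTop (𝓝 (H x y)))
    (hHpos : ∀ x y : G, 0 < H x y) :
    ∀ y ∈ ratioLimitRadical H,
      Tendsto (fun m : ℕ => ν m y / ν m 1) atTop (𝓝 1) := by
  intro y hy
  have hνsym := nu_symm_aux μ hμfin ν hν0 hνs hsym
  -- T1 : ν m y / ν m 1 → H y 1
  have T1 : Tendsto (fun m : ℕ => ν m y / ν m 1) atTop (𝓝 (H y 1)) := by
    have := hH y 1
    have heq : (fun m : ℕ => ν m (y⁻¹ * 1) / ν m 1) = fun m : ℕ => ν m y / ν m 1 := by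
      funext m
      rw [mul_one, ← hνsym m y]
    rwa [heq] at this
  -- T2 : ν m 1 / ν m y → H y y = H y 1
  have T2 : Tendsto (fun m : ℕ => ν m 1 / ν m y) atTop (𝓝 (H y 1)) := by
    have := hH y y
    rw [hy y] at this
    have heq : (fun m : ℕ => ν m (y⁻¹ * y) / ν m y) = fun m : ℕ => ν m 1 / ν m y := by
      funext m; rw [inv_mul_cancel]
    rwa [heq] at this
  -- product tends to (H y 1)^2, but equals 1 eventually
  have Tprod : Tendsto (fun m : ℕ => (ν m y / ν m 1) * (ν m 1 / ν m y)) atTop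
      (𝓝 (H y 1 * H y 1)) := T1.mul T2
  obtain ⟨m₁, hm₁⟩ := hev y
  obtain ⟨m₂, hm₂⟩ := hev 1
  have hevone : ∀ᶠ m : ℕ in atTop, (ν m y / ν m 1) * (ν m 1 / ν m y) = 1 := by
    filter_upwards [eventually_ge_atTop m₁, eventually_ge_atTop m₂] with m h1 h2
    have hy' := (hm₁ m h1).ne'
    have h1' := (hm₂ m h2).ne'
    field_simp
  have Tprod' : Tendsto (fun m : ℕ => (ν m y / ν m 1) * (ν m 1 / ν m y)) atTop (𝓝 1) :=
    Tendsto.congr' (by filter_upwards [hevone] with m h using h.symm) tendsto_const_nhds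
  have hsq : H y 1 * H y 1 = 1 := tendsto_nhds_unique Tprod Tprod'
  have hone : H y 1 = 1 := by
    have hpos := hHpos y 1
    nlinarith
  rwa [hone] at T1
end

section
/- Fix n ∈ ℕ and i, j ∈ G with μ^{*n}(i⁻¹j) > 0. Then there exists a bounded linear operator S on the Fock space ℓ²(I) with operator norm ‖S‖ ≤ 1 such that for every index (m, j', k) ∈ I: if j' = j then S e^{(m)}_{j',k} = √(μ^{*n}(i⁻¹j)·μ^{*m}(j⁻¹k)/μ^{*(n+m)}(i⁻¹k))·e^{(n+m)}_{i,k} (the target index (n+m, i, k) lies in I since μ^{*(n+m)}(i⁻¹k) ≥ μ^{*n}(i⁻¹j)·μ^{*m}(j⁻¹k) > 0), and if j' ≠ j then S e^{(m)}_{j',k} = 0. -/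
/-!
On `ℓᵖ`, a weighted composition operator `x ↦ c · (x ∘ pre)` whose weights satisfy `|c| ≤ 1` and
whose index map `pre` is injective where `c ≠ 0` is a contraction, since its `p`-th power sums are
sub-sums of those of `x`. The creation operator is such an operator: the coordinate
`(n + m, i, k)` reads off `(m, j, k)` with weight `√(μ^{*n}(i⁻¹j) μ^{*m}(j⁻¹k) / μ^{*(n+m)}(i⁻¹k))`,
and this weight is at most `1` by the Chapman–Kolmogorov inequality
`μ^{*n}(a) μ^{*m}(b) ≤ μ^{*(n+m)}(ab)`.
-/

open Filter Topology
open scoped Classical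

noncomputable section

/-- The index set of the Fock space of the random walk: triples (m, j, k) with
μ^{*m}(j⁻¹k) > 0. -/
def FockIndex {G : Type*} [Group G] (ν : ℕ → G → ℝ) : Type _ :=
  {p : ℕ × G × G // 0 < ν p.1 (p.2.1⁻¹ * p.2.2)}

/-- The Fock space ℓ²(I) of the random walk. -/
abbrev FockSpace {G : Type*} [Group G] (ν : ℕ → G → ℝ) : Type _ :=
  lp (fun _ : FockIndex ν => ℝ) 2

/-- The orthonormal basis vector e^{(m)}_{j,k} of the Fock space. -/
def fockVec {G : Type*} [Group G] (ν : ℕ → G → ℝ) (i : FockIndex ν) : FockSpace ν :=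
  lp.single 2 i 1

open Function

namespace lp

variable {ι κ 𝕜 E : Type*} [NontriviallyNormedField 𝕜] [NormedAddCommGroup E] [NormedSpace 𝕜 E]
  {p : ENNReal} {c : ι → 𝕜} {pre : ι → κ}

lemma sum_rpow_norm_smul_comp_le (hp : 0 < p.toReal) (hc : ∀ q, ‖c q‖ ≤ 1)
    (hinj : Set.InjOn pre (support c)) (x : lp (fun _ : κ => E) p) (s : Finset ι) :
    ∑ q ∈ s, ‖c q • x (pre q)‖ ^ p.toReal ≤ ‖x‖ ^ p.toReal := by
  calc ∑ q ∈ s, ‖c q • x (pre q)‖ ^ p.toReal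
      = ∑ q ∈ s with c q ≠ 0, ‖c q • x (pre q)‖ ^ p.toReal := by
        rw [Finset.sum_filter_of_ne]
        intro q _ hq hcq
        exact hq (by simp [hcq, Real.zero_rpow hp.ne'])
    _ ≤ ∑ q ∈ s with c q ≠ 0, ‖x (pre q)‖ ^ p.toReal := by
        refine Finset.sum_le_sum fun q _ => Real.rpow_le_rpow (norm_nonneg _) ?_ hp.le
        rw [norm_smul]
        exact mul_le_of_le_one_left (norm_nonneg _) (hc q)
    _ = ∑ r ∈ (s.filter (c · ≠ 0)).image pre, ‖x r‖ ^ p.toReal := by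
        rw [Finset.sum_image]
        intro a ha b hb
        exact hinj (Finset.mem_filter.1 ha).2 (Finset.mem_filter.1 hb).2
    _ ≤ ‖x‖ ^ p.toReal := lp.sum_rpow_le_norm_rpow hp x _

variable [Fact (1 ≤ p)]

def weightedComp (hp : 0 < p.toReal) (c : ι → 𝕜) (pre : ι → κ)
    (hc : ∀ q, ‖c q‖ ≤ 1) (hinj : Set.InjOn pre (support c)) :
    lp (fun _ : κ => E) p →L[𝕜] lp (fun _ : ι => E) p :=
  LinearMap.mkContinuous
    { toFun x := ⟨fun q => c q • x (pre q), memℓp_gen' (sum_rpow_norm_smul_comp_le hp hc hinj x)⟩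
      map_add' x y := lp.ext <| funext fun q => by simp [smul_add]; rfl
      map_smul' a x := lp.ext <| funext fun q => by simp [smul_comm a] }
    1 fun x => by
      rw [one_mul]
      exact lp.norm_le_of_forall_sum_le hp (norm_nonneg x) (sum_rpow_norm_smul_comp_le hp hc hinj x)

variable (hp : 0 < p.toReal) (hc : ∀ q, ‖c q‖ ≤ 1) (hinj : Set.InjOn pre (support c))

@[simp]
lemma weightedComp_apply (x : lp (fun _ : κ => E) p) (q : ι) :
    weightedComp hp c pre hc hinj x q = c q • x (pre q) :=
  rfl

lemma norm_weightedComp_le :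
    ‖(weightedComp hp c pre hc hinj : lp (fun _ : κ => E) p →L[𝕜] lp (fun _ : ι => E) p)‖ ≤ 1 :=
  LinearMap.mkContinuous_norm_le _ zero_le_one _

variable [DecidableEq κ]

lemma weightedComp_single [DecidableEq ι] {q₀ : ι} (hq₀ : c q₀ ≠ 0) (a : E) :
    weightedComp hp c pre hc hinj (lp.single p (pre q₀) a) = lp.single p q₀ (c q₀ • a) := by
  refine lp.ext <| funext fun q => ?_
  by_cases hq : q = q₀
  · simp [hq]
  by_cases hcq : c q = 0
  · simp [hq, hcq]
  have hpre : pre q ≠ pre q₀ := fun h => hq (hinj hcq hq₀ h)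
  simp [hq, hpre]

lemma weightedComp_single_eq_zero {r : κ} (hr : ∀ q, c q ≠ 0 → pre q ≠ r) (a : E) :
    weightedComp hp c pre hc hinj (lp.single p r a) = 0 := by
  refine lp.ext <| funext fun q => ?_
  by_cases hcq : c q = 0
  · simp [hcq]
  simp [hr q hcq]

end lp

lemma hasFiniteSupport_mul_comp_inv_mul {G : Type*} [Group G] {μ : G → ℝ}
    (hμ : (support μ).Finite) (f : G → ℝ) (b : G) :
    HasFiniteSupport fun g => f g * μ (g⁻¹ * b) :=
  (hμ.image fun t => b * t⁻¹).subset fun g hg =>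
    ⟨g⁻¹ * b, right_ne_zero_of_mul hg, by group⟩

structure IsConvPowers {G : Type*} [Group G] (μ : G → ℝ) (ν : ℕ → G → ℝ) : Prop where
  zero : ∀ x, ν 0 x = if x = 1 then 1 else 0
  succ : ∀ m x, ν (m + 1) x = ∑ᶠ g, ν m g * μ (g⁻¹ * x)

namespace IsConvPowers

variable {G : Type*} [Group G] {μ : G → ℝ} {ν : ℕ → G → ℝ}

lemma nonneg (hν : IsConvPowers μ ν) (hμ : ∀ g, 0 ≤ μ g) : ∀ m x, 0 ≤ ν m x
  | 0, x => by rw [hν.zero]; split_ifs <;> norm_num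
  | m + 1, x => by
    rw [hν.succ]
    exact finsum_nonneg fun g => mul_nonneg (hν.nonneg hμ m g) (hμ _)

lemma apply_mul_apply_le (hν : IsConvPowers μ ν) (hμ : ∀ g, 0 ≤ μ g)
    (hμfin : (support μ).Finite) (n : ℕ) (a : G) :
    ∀ m b, ν n a * ν m b ≤ ν (n + m) (a * b)
  | 0, b => by
    rw [hν.zero]
    split_ifs with hb
    · simp [hb]
    · simpa using hν.nonneg hμ n (a * b)
  | m + 1, b =>
    calc ν n a * ν (m + 1) b = ∑ᶠ g, ν n a * ν m g * μ (g⁻¹ * b) := by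
          simp_rw [hν.succ, mul_finsum, mul_assoc]
      _ ≤ ∑ᶠ g, ν (n + m) (a * g) * μ (g⁻¹ * b) :=
          finsum_le_finsum' (hasFiniteSupport_mul_comp_inv_mul hμfin _ b)
            (hasFiniteSupport_mul_comp_inv_mul hμfin _ b) fun g =>
            mul_le_mul_of_nonneg_right (hν.apply_mul_apply_le hμ hμfin n a m g) (hμ _)
      _ = ∑ᶠ g, ν (n + m) g * μ (g⁻¹ * (a * b)) := by
          rw [← finsum_comp_equiv (Equiv.mulLeft a)
            (f := fun g => ν (n + m) g * μ (g⁻¹ * (a * b)))]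
          simp [mul_assoc]
      _ = ν (n + (m + 1)) (a * b) := (hν.succ _ _).symm

lemma apply_inv_mul_mul_apply_inv_mul_le (hν : IsConvPowers μ ν) (hμ : ∀ g, 0 ≤ μ g)
    (hμfin : (support μ).Finite) (n m : ℕ) (a b c : G) :
    ν n (a⁻¹ * b) * ν m (b⁻¹ * c) ≤ ν (n + m) (a⁻¹ * c) := by
  simpa [mul_assoc] using hν.apply_mul_apply_le hμ hμfin n (a⁻¹ * b) m (b⁻¹ * c)

end IsConvPowers

section Creation

variable {G : Type*} [Group G] (ν : ℕ → G → ℝ) (n : ℕ) (i j : G)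

/-- `q = (n + m, i, k)` with `(m, j, k) ∈ I`; the bound `n ≤ q.1.1` guards the truncated
subtraction. -/
def IsCreationTarget (q : FockIndex ν) : Prop :=
  q.1.2.1 = i ∧ n ≤ q.1.1 ∧ 0 < ν (q.1.1 - n) (j⁻¹ * q.1.2.2)

/-- The fallback value `q` off the creation targets is never read: `creationWeight` vanishes
there. -/
def creationSource (q : FockIndex ν) : FockIndex ν :=
  if h : IsCreationTarget ν n i j q then ⟨(q.1.1 - n, j, q.1.2.2), h.2.2⟩ else q

def creationWeight (q : FockIndex ν) : ℝ :=
  if IsCreationTarget ν n i j q then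
    √(ν n (i⁻¹ * j) * ν (q.1.1 - n) (j⁻¹ * q.1.2.2) / ν q.1.1 (i⁻¹ * q.1.2.2))
  else 0

variable {ν n i j}

lemma isCreationTarget_of_creationWeight_ne_zero {q : FockIndex ν}
    (hq : creationWeight ν n i j q ≠ 0) : IsCreationTarget ν n i j q := by
  by_contra h
  exact hq (if_neg h)

lemma creationSource_of_isCreationTarget {q : FockIndex ν} (hq : IsCreationTarget ν n i j q) :
    creationSource ν n i j q = ⟨(q.1.1 - n, j, q.1.2.2), hq.2.2⟩ :=
  dif_pos hq

lemma injOn_creationSource :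
    Set.InjOn (creationSource ν n i j) (support (creationWeight ν n i j)) := by
  rintro ⟨⟨m₁, i₁, k₁⟩, h₁⟩ hq₁ ⟨⟨m₂, i₂, k₂⟩, h₂⟩ hq₂ hsrc
  have ht₁ := isCreationTarget_of_creationWeight_ne_zero hq₁
  have ht₂ := isCreationTarget_of_creationWeight_ne_zero hq₂
  rw [creationSource_of_isCreationTarget ht₁, creationSource_of_isCreationTarget ht₂] at hsrc
  obtain ⟨hi₁, hn₁, _⟩ := ht₁
  obtain ⟨hi₂, hn₂, _⟩ := ht₂
  have hm : m₁ - n = m₂ - n := congrArg (fun q : FockIndex ν => q.1.1) hsrc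
  have hk : k₁ = k₂ := congrArg (fun q : FockIndex ν => q.1.2.2) hsrc
  simp only at hi₁ hi₂ hn₁ hn₂
  exact Subtype.ext (Prod.ext (show m₁ = m₂ by omega) (Prod.ext (hi₁.trans hi₂.symm) hk))

lemma isCreationTarget_mk {m : ℕ} {k : G} (h : 0 < ν m (j⁻¹ * k))
    (h' : 0 < ν (n + m) (i⁻¹ * k)) : IsCreationTarget ν n i j ⟨(n + m, i, k), h'⟩ :=
  ⟨rfl, Nat.le_add_right n m, by simpa using h⟩

lemma creationSource_mk {m : ℕ} {k : G} (h : 0 < ν m (j⁻¹ * k))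
    (h' : 0 < ν (n + m) (i⁻¹ * k)) :
    creationSource ν n i j ⟨(n + m, i, k), h'⟩ = ⟨(m, j, k), h⟩ := by
  rw [creationSource_of_isCreationTarget (isCreationTarget_mk h h')]
  exact Subtype.ext (by simp)

lemma creationWeight_mk {m : ℕ} {k : G} (h : 0 < ν m (j⁻¹ * k))
    (h' : 0 < ν (n + m) (i⁻¹ * k)) :
    creationWeight ν n i j ⟨(n + m, i, k), h'⟩ =
      √(ν n (i⁻¹ * j) * ν m (j⁻¹ * k) / ν (n + m) (i⁻¹ * k)) := by
  unfold creationWeight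
  rw [if_pos (isCreationTarget_mk h h')]
  simp

lemma creationSource_ne_of_ne {q : FockIndex ν} (hq : creationWeight ν n i j q ≠ 0)
    {m : ℕ} {j' k : G} (h : 0 < ν m (j'⁻¹ * k)) (hj' : j' ≠ j) :
    creationSource ν n i j q ≠ ⟨(m, j', k), h⟩ := by
  rw [creationSource_of_isCreationTarget (isCreationTarget_of_creationWeight_ne_zero hq)]
  exact fun hsrc => hj' (congrArg (fun q : FockIndex ν => q.1.2.1) hsrc).symm

lemma norm_creationWeight_le_one {μ : G → ℝ} (hν : IsConvPowers μ ν) (hμ : ∀ g, 0 ≤ μ g)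
    (hμfin : (support μ).Finite) (q : FockIndex ν) : ‖creationWeight ν n i j q‖ ≤ 1 := by
  unfold creationWeight
  split_ifs with hq
  · obtain ⟨⟨m, i', k⟩, hpos⟩ := q
    obtain ⟨hi, hn, -⟩ := hq
    simp only at hi hn hpos ⊢
    rw [hi] at hpos
    have hle := hν.apply_inv_mul_mul_apply_inv_mul_le hμ hμfin n (m - n) i j k
    rw [Nat.add_sub_cancel' hn] at hle
    rw [Real.norm_of_nonneg (Real.sqrt_nonneg _), Real.sqrt_le_one]
    exact div_le_one_of_le₀ hle hpos.le
  · simp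

end Creation

theorem stmt10_general {G : Type*} [Group G]
(μ : G → ℝ) (hμnn : ∀ g : G, 0 ≤ μ g)
    (hμfin : (Function.support μ).Finite)
    (ν : ℕ → G → ℝ)
    (hν0 : ∀ x : G, ν 0 x = if x = 1 then 1 else 0)
    (hνs : ∀ (m : ℕ) (x : G), ν (m + 1) x = ∑ᶠ g : G, ν m g * μ (g⁻¹ * x))
    (n : ℕ) (i j : G) (hij : 0 < ν n (i⁻¹ * j)) :
    ∃ S : FockSpace ν →L[ℝ] FockSpace ν, ‖S‖ ≤ 1 ∧
      ∀ (m : ℕ) (j' k : G) (h : 0 < ν m (j'⁻¹ * k)),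
        (j' = j → ∃ h' : 0 < ν (n + m) (i⁻¹ * k),
          S (fockVec ν ⟨(m, j', k), h⟩) =
            Real.sqrt (ν n (i⁻¹ * j) * ν m (j⁻¹ * k) / ν (n + m) (i⁻¹ * k)) •
              fockVec ν ⟨(n + m, i, k), h'⟩) ∧
        (j' ≠ j → S (fockVec ν ⟨(m, j', k), h⟩) = 0) := by
  have hν : IsConvPowers μ ν := ⟨hν0, hνs⟩
  have hp : 0 < (2 : ENNReal).toReal := by norm_num
  have hc := norm_creationWeight_le_one (n := n) (i := i) (j := j) hν hμnn hμfin
  refine ⟨lp.weightedComp hp _ _ hc injOn_creationSource, lp.norm_weightedComp_le .., ?_⟩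
  intro m j' k h
  refine ⟨?_, fun hj' => ?_⟩
  · rintro rfl
    have h' : 0 < ν (n + m) (i⁻¹ * k) :=
      (mul_pos hij h).trans_le (hν.apply_inv_mul_mul_apply_inv_mul_le hμnn hμfin n m i j' k)
    have hw : creationWeight ν n i j' ⟨(n + m, i, k), h'⟩ ≠ 0 := by
      rw [creationWeight_mk h h']
      exact (Real.sqrt_pos.2 (div_pos (mul_pos hij h) h')).ne'
    have hS := lp.weightedComp_single hp hc injOn_creationSource hw (1 : ℝ)
    rw [creationSource_mk h h', creationWeight_mk h h'] at hS
    exact ⟨h', hS.trans (lp.single_smul 2 _ _ _)⟩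
  · exact lp.weightedComp_single_eq_zero _ _ _ (fun q hq => creationSource_ne_of_ne hq h hj') _

/-- existence of the bounded creation operator S^{(n)}_{i,j} of norm at
most 1 on the Fock space of the random walk. -/
theorem stmt10 {G : Type*} [Group G] [Countable G]
(μ : G → ℝ) (hμnn : ∀ g : G, 0 ≤ μ g)
    (hμfin : (Function.support μ).Finite)
    (hμgen : Subsemigroup.closure (Function.support μ) = ⊤)
    (hμsum : ∑ᶠ g : G, μ g = 1)
    (ν : ℕ → G → ℝ)
    (hν0 : ∀ x : G, ν 0 x = if x = 1 then 1 else 0)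
    (hνs : ∀ (m : ℕ) (x : G), ν (m + 1) x = ∑ᶠ g : G, ν m g * μ (g⁻¹ * x))
    (n : ℕ) (i j : G) (hij : 0 < ν n (i⁻¹ * j)) :
    ∃ S : FockSpace ν →L[ℝ] FockSpace ν, ‖S‖ ≤ 1 ∧
      ∀ (m : ℕ) (j' k : G) (h : 0 < ν m (j'⁻¹ * k)),
        (j' = j → ∃ h' : 0 < ν (n + m) (i⁻¹ * k),
          S (fockVec ν ⟨(m, j', k), h⟩) =
            Real.sqrt (ν n (i⁻¹ * j) * ν m (j⁻¹ * k) / ν (n + m) (i⁻¹ * k)) •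
              fockVec ν ⟨(n + m, i, k), h'⟩) ∧
        (j' ≠ j → S (fockVec ν ⟨(m, j', k), h⟩) = 0) :=
  stmt10_general μ hμnn hμfin ν hν0 hνs n i j hij
end
end

section
/- Assume P is eventually positive and has SRLP with ratio-limit kernel H, and suppose c, C : G → ℝ satisfy 0 < c(x) ≤ H(x,y) ≤ C(x) for all x, y ∈ G. Let φ : G → ℕ be a bijection and define d : G × G → ℝ by d(y,z) = ∑_{x ∈ G} |H(x,y) − H(x,z)|/(C(x)·2^{φ(x)}). Then: (i) the series defining d(y,z) is summable for all y, z; (ii) d is symmetric and satisfies the triangle inequality d(y,w) ≤ d(y,z) + d(z,w); and (iii) d(y,z) = 0 if and only if y⁻¹z ∈ R_μ, so d descends to a metric on the coset space G/R_μ. -/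
open Filter Topology
open scoped Classical

/-!
The weights `1 / (C x * 2 ^ φ x)` are summable against the bounded differences
`|H x y - H x z| ≤ C x`, and (i)–(ii) are general facts about weighted ℓ¹ distances.
For (iii), passing to the limit in `ν m ((x * w)⁻¹ * y) / ν m y` shows that `H` is a cocycle,
`H (x * w) y = H w (x⁻¹ * y) * H x y`, with `H 1 y = 1`. Hence
`H x (y⁻¹ * z) = H (y * x) z / H y z`, so `y⁻¹ * z` lies in the radical iff `H · z` and `H · y`
are proportional, and `H 1 · = 1` forces the constant to be `1`.
-/

section WeightedDistance

variable {ι : Type*}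

theorem summable_abs_sub_div_mul_two_pow {α : Type*} {f : ι → α → ℝ} {C : ι → ℝ} {φ : ι → ℕ}
    (hφ : Function.Injective φ) (hf0 : ∀ i a, 0 ≤ f i a) (hfC : ∀ i a, f i a ≤ C i) (a b : α) :
    Summable fun i => |f i a - f i b| / (C i * 2 ^ φ i) := by
  have hgeom : Summable fun i => (1 / 2 : ℝ) ^ φ i :=
    (summable_geometric_of_lt_one (by norm_num) (by norm_num)).comp_injective hφ
  refine hgeom.of_nonneg_of_le (fun i => ?_) (fun i => ?_)
  · have hC : 0 ≤ C i := (hf0 i a).trans (hfC i a)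
    positivity
  · have hdiff : |f i a - f i b| ≤ C i := by
      simpa using abs_sub_le_of_le_of_le (hf0 i a) (hfC i a) (hf0 i b) (hfC i b)
    rw [div_mul_eq_div_div, one_div_pow]
    exact div_le_div_of_nonneg_right (div_le_one_of_le₀ hdiff ((abs_nonneg _).trans hdiff))
      (by positivity)

variable {u v w D : ι → ℝ}

theorem tsum_abs_sub_div_le_add (hD : ∀ i, 0 ≤ D i)
    (huw : Summable fun i => |u i - w i| / D i) (huv : Summable fun i => |u i - v i| / D i)
    (hvw : Summable fun i => |v i - w i| / D i) :
    ∑' i, |u i - w i| / D i ≤ ∑' i, |u i - v i| / D i + ∑' i, |v i - w i| / D i := by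
  rw [← huv.tsum_add hvw]
  refine huw.tsum_le_tsum (fun i => ?_) (huv.add hvw)
  rw [← add_div]
  exact div_le_div_of_nonneg_right (abs_sub_le _ _ _) (hD i)

theorem tsum_abs_sub_div_eq_zero_iff (hD : ∀ i, 0 < D i)
    (huv : Summable fun i => |u i - v i| / D i) :
    ∑' i, |u i - v i| / D i = 0 ↔ ∀ i, u i = v i := by
  rw [← huv.hasSum_iff, hasSum_zero_iff_of_nonneg fun i => div_nonneg (abs_nonneg _) (hD i).le,
    funext_iff]
  refine forall_congr' fun i => ?_
  rw [Pi.zero_apply, div_eq_zero_iff, abs_eq_zero, sub_eq_zero, or_iff_left (hD i).ne']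

end WeightedDistance

section RatioLimit

variable {G : Type*} [Group G] {ν : ℕ → G → ℝ} {H : G → G → ℝ}

theorem ratioLimit_one_left {y : G} (hy : ∀ᶠ m in atTop, ν m y ≠ 0)
    (hH : Tendsto (fun m => ν m (1⁻¹ * y) / ν m y) atTop (𝓝 (H 1 y))) :
    H 1 y = 1 := by
  refine tendsto_nhds_unique hH (tendsto_const_nhds.congr' ?_)
  filter_upwards [hy] with m hm
  rw [inv_one, one_mul, div_self hm]

theorem ratioLimit_mul_left {x w y : G} (hxy : ∀ᶠ m in atTop, ν m (x⁻¹ * y) ≠ 0)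
    (hxw : Tendsto (fun m => ν m ((x * w)⁻¹ * y) / ν m y) atTop (𝓝 (H (x * w) y)))
    (hw : Tendsto (fun m => ν m (w⁻¹ * (x⁻¹ * y)) / ν m (x⁻¹ * y)) atTop
      (𝓝 (H w (x⁻¹ * y))))
    (hx : Tendsto (fun m => ν m (x⁻¹ * y) / ν m y) atTop (𝓝 (H x y))) :
    H (x * w) y = H w (x⁻¹ * y) * H x y := by
  refine tendsto_nhds_unique hxw ((hw.mul hx).congr' ?_)
  filter_upwards [hxy] with m hm
  rw [mul_inv_rev, mul_assoc, div_mul_div_cancel₀ hm]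

end RatioLimit

section Cocycle

variable {G : Type*} [Group G] {H : G → G → ℝ}
  (hone : ∀ y, H 1 y = 1) (hco : ∀ x w y, H (x * w) y = H w (x⁻¹ * y) * H x y)
include hone hco

theorem cocycle_ne_zero (y z : G) : H y z ≠ 0 := fun h => by
  have h1 := hco y y⁻¹ z
  rw [mul_inv_cancel, hone, h, mul_zero] at h1
  exact one_ne_zero h1

theorem cocycle_inv_mul_eq_div (x y z : G) : H x (y⁻¹ * z) = H (y * x) z / H y z := by
  rw [hco, mul_div_cancel_right₀ _ (cocycle_ne_zero hone hco y z)]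

theorem inv_mul_mem_ratioLimitRadical_iff (y z : G) :
    y⁻¹ * z ∈ ratioLimitRadical H ↔ ∀ x, H x y = H x z := by
  have hnorm := cocycle_ne_zero hone hco y
  have hdiv : y⁻¹ * z ∈ ratioLimitRadical H ↔ ∀ x, H x z / H y z = H x y / H y y := by
    simp only [ratioLimitRadical, Set.mem_ofPred_eq]
    conv_lhs => enter [x, 2]; rw [← inv_mul_cancel y]
    simp only [cocycle_inv_mul_eq_div hone hco]
    exact (Equiv.mulLeft y).forall_congr fun {_} => Iff.rfl
  rw [hdiv]
  refine ⟨fun h x => ?_, fun h x => by rw [h, h y]⟩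
  have hyy : H y z = H y y := by
    simpa [hone, hnorm] using h 1
  simpa [hyy, hnorm, eq_comm] using h x

end Cocycle

theorem stmt12_general {G : Type*} [Group G]
    (ν : ℕ → G → ℝ)
(hev : ∀ y : G, ∃ m₀ : ℕ, ∀ m ≥ m₀, 0 < ν m y)
(H : G → G → ℝ)
    (hH : ∀ x y : G, Tendsto (fun m : ℕ => ν m (x⁻¹ * y) / ν m y) atTop (𝓝 (H x y)))
    (hHpos : ∀ x y : G, 0 < H x y)
    (C : G → ℝ) (hHC : ∀ x y : G, H x y ≤ C x)
    (φ : G → ℕ) (hφ : Function.Bijective φ) :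
    (∀ y z : G, Summable fun x : G => |H x y - H x z| / (C x * 2 ^ φ x)) ∧
    (∀ y z : G,
      (∑' x : G, |H x y - H x z| / (C x * 2 ^ φ x)) =
        ∑' x : G, |H x z - H x y| / (C x * 2 ^ φ x)) ∧
    (∀ y z w : G,
      (∑' x : G, |H x y - H x w| / (C x * 2 ^ φ x)) ≤
        (∑' x : G, |H x y - H x z| / (C x * 2 ^ φ x)) +
          ∑' x : G, |H x z - H x w| / (C x * 2 ^ φ x)) ∧
    (∀ y z : G,
      (∑' x : G, |H x y - H x z| / (C x * 2 ^ φ x)) = 0 ↔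
        y⁻¹ * z ∈ ratioLimitRadical H) := by
  have hsum := summable_abs_sub_div_mul_two_pow hφ.injective (fun x y => (hHpos x y).le) hHC
  have hden : ∀ x, 0 < C x * 2 ^ φ x := fun x =>
    mul_pos ((hHpos x 1).trans_le (hHC x 1)) (by positivity)
  have hne : ∀ y, ∀ᶠ m in atTop, ν m y ≠ 0 := fun y =>
    (eventually_atTop.2 (hev y)).mono fun _ h => h.ne'
  have hone : ∀ y, H 1 y = 1 := fun y => ratioLimit_one_left (hne y) (hH 1 y)
  have hco : ∀ x w y, H (x * w) y = H w (x⁻¹ * y) * H x y := fun x w y =>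
    ratioLimit_mul_left (hne _) (hH _ _) (hH _ _) (hH _ _)
  refine ⟨hsum, fun y z => tsum_congr fun x => by rw [abs_sub_comm], fun y z w =>
    tsum_abs_sub_div_le_add (fun x => (hden x).le) (hsum y w) (hsum y z) (hsum z w),
    fun y z => ?_⟩
  rw [tsum_abs_sub_div_eq_zero_iff hden (hsum y z), inv_mul_mem_ratioLimitRadical_iff hone hco]

/-- the metric defining the ratio-limit space: summability, symmetry,
triangle inequality, and vanishing exactly on cosets of the ratio-limit radical. -/
theorem stmt12 {G : Type*} [Group G] [Countable G]
(μ : G → ℝ) (hμnn : ∀ g : G, 0 ≤ μ g)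
    (hμfin : (Function.support μ).Finite)
    (hμgen : Subsemigroup.closure (Function.support μ) = ⊤)
    (hμsum : ∑ᶠ g : G, μ g = 1)
    (ν : ℕ → G → ℝ)
    (hν0 : ∀ x : G, ν 0 x = if x = 1 then 1 else 0)
    (hνs : ∀ (m : ℕ) (x : G), ν (m + 1) x = ∑ᶠ g : G, ν m g * μ (g⁻¹ * x))
(hev : ∀ y : G, ∃ m₀ : ℕ, ∀ m ≥ m₀, 0 < ν m y)
(H : G → G → ℝ)
    (hH : ∀ x y : G, Tendsto (fun m : ℕ => ν m (x⁻¹ * y) / ν m y) atTop (𝓝 (H x y)))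
    (hHpos : ∀ x y : G, 0 < H x y)
    (c C : G → ℝ) (hc : ∀ x : G, 0 < c x)
    (hcH : ∀ x y : G, c x ≤ H x y) (hHC : ∀ x y : G, H x y ≤ C x)
    (φ : G → ℕ) (hφ : Function.Bijective φ) :
    (∀ y z : G, Summable fun x : G => |H x y - H x z| / (C x * 2 ^ φ x)) ∧
    (∀ y z : G,
      (∑' x : G, |H x y - H x z| / (C x * 2 ^ φ x)) =
        ∑' x : G, |H x z - H x y| / (C x * 2 ^ φ x)) ∧
    (∀ y z w : G,
      (∑' x : G, |H x y - H x w| / (C x * 2 ^ φ x)) ≤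
        (∑' x : G, |H x y - H x z| / (C x * 2 ^ φ x)) +
          ∑' x : G, |H x z - H x w| / (C x * 2 ^ φ x)) ∧
    (∀ y z : G,
      (∑' x : G, |H x y - H x z| / (C x * 2 ^ φ x)) = 0 ↔
        y⁻¹ * z ∈ ratioLimitRadical H) :=
  stmt12_general ν hev H hH hHpos C hHC φ hφ
end

section
/- Assume P is eventually positive and has SRLP with ratio-limit kernel H, and suppose c, C : G → ℝ satisfy 0 < c(x) ≤ H(x,y) ≤ C(x) for all x, y ∈ G. Let φ : G → ℕ be a bijection and define d : G × G → ℝ by d(y,z) = ∑_{x ∈ G} |H(x,y) − H(x,z)|/(C(x)·2^{φ(x)}). Then for every g ∈ G, left translation y ↦ g·y is uniformly continuous with respect to d: for every ε > 0 there exists δ > 0 such that for all y, z ∈ G, d(y,z) < δ implies d(g·y, g·z) < ε. -/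
/-!
Writing `H x (g * w)` as `H (g⁻¹ * x) w / H g⁻¹ w` (a consequence of the ratio limits), the
`x`-coordinate of the translated point is a quotient of two coordinates of the original point,
with denominators bounded below by `c g⁻¹`. Each coordinate is controlled by the distance, so every
coordinate of the translate is Lipschitz in `d`; the summable weights `2 ^ (-φ x)` make all but
finitely many coordinates negligible.
-/

open Filter Topology
open scoped Classical

theorem exists_pos_forall_tsum_lt_of_le_mul {ι α : Type*} {a : ι → α → ℝ} {b K : α → ℝ}
    {D : ι → ℝ} (hb : Summable b) (ha : ∀ i x, 0 ≤ a i x) (hab : ∀ i x, a i x ≤ b x)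
    (hK : ∀ x, 0 ≤ K x) (haK : ∀ i x, a i x ≤ K x * D i) :
    ∀ ε > (0 : ℝ), ∃ δ > (0 : ℝ), ∀ i, D i < δ → ∑' x, a i x < ε := by
  intro ε hε
  obtain ⟨F, hF⟩ := ((tendsto_tsum_compl_atTop_zero b).eventually
    (gt_mem_nhds (half_pos hε))).exists
  set T := ∑ x ∈ F, K x
  have hT : 0 ≤ T := Finset.sum_nonneg fun x _ => hK x
  refine ⟨ε / (2 * (T + 1)), by positivity, fun i hi => ?_⟩
  have hai : Summable (a i) := hb.of_nonneg_of_le (ha i) (hab i)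
  have head : ∑ x ∈ F, a i x ≤ T * D i := by
    rw [Finset.sum_mul]
    exact Finset.sum_le_sum fun x _ => haK i x
  have tail : ∑' x : ↑((F : Set α)ᶜ), a i x < ε / 2 :=
    (Summable.tsum_le_tsum (fun x : ↑((F : Set α)ᶜ) => hab i x) (hai.subtype _)
      (hb.subtype _)).trans_lt hF
  rw [← hai.sum_add_tsum_compl (s := F)]
  calc _ < T * (ε / (2 * (T + 1))) + ε / 2 :=
        add_lt_add_of_le_of_lt (head.trans (mul_le_mul_of_nonneg_left hi.le hT)) tail
    _ ≤ ε / 2 + ε / 2 := by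
        gcongr
        rw [mul_div_assoc', div_le_div_iff₀ (by positivity) two_pos]
        nlinarith
    _ = ε := add_halves ε

theorem abs_div_sub_div_le {a₁ a₂ b₁ b₂ A B c : ℝ} (hc : 0 < c) (hb₁ : c ≤ b₁) (hb₂ : c ≤ b₂)
    (hb₂B : b₂ ≤ B) (ha₂ : 0 ≤ a₂) (ha₂A : a₂ ≤ A) :
    |a₁ / b₁ - a₂ / b₂| ≤ (B * |a₁ - a₂| + A * |b₁ - b₂|) / c ^ 2 := by
  have hb₁' : 0 < b₁ := hc.trans_le hb₁
  have hb₂' : 0 < b₂ := hc.trans_le hb₂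
  have key : a₁ / b₁ - a₂ / b₂ = ((a₁ - a₂) * b₂ + a₂ * (b₂ - b₁)) / (b₁ * b₂) := by
    field_simp
    ring
  rw [key, abs_div, abs_of_pos (mul_pos hb₁' hb₂'), pow_two]
  have hnum : |(a₁ - a₂) * b₂ + a₂ * (b₂ - b₁)| ≤ B * |a₁ - a₂| + A * |b₁ - b₂| := by
    calc |(a₁ - a₂) * b₂ + a₂ * (b₂ - b₁)|
        ≤ |a₁ - a₂| * b₂ + a₂ * |b₁ - b₂| := by
          refine (abs_add_le _ _).trans_eq ?_
          rw [abs_mul, abs_mul, abs_of_pos hb₂', abs_of_nonneg ha₂, abs_sub_comm b₂]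
      _ ≤ B * |a₁ - a₂| + A * |b₁ - b₂| := by
          rw [mul_comm B]
          gcongr
  exact div_le_div₀ ((abs_nonneg _).trans hnum) hnum (mul_pos hc hc)
    (mul_le_mul hb₁ hb₂ hc.le hb₁'.le)

section RatioDist

variable {α β : Type*} (H : α → β → ℝ) (W : α → ℝ)

/-- The paper's distance `d` is `ratioDist H (fun x => C x * 2 ^ φ x)`. -/
noncomputable def ratioDist (y z : β) : ℝ := ∑' x, |H x y - H x z| / W x

variable {H W}

theorem abs_sub_le_ratioDist_mul (hW : ∀ x, 0 < W x) {B : α → ℝ}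
    (hB : ∀ x y z, |H x y - H x z| ≤ B x) (hBW : Summable fun x => B x / W x) (x : α) (y z : β) :
    |H x y - H x z| ≤ ratioDist H W y z * W x := by
  have hs : Summable fun x => |H x y - H x z| / W x :=
    hBW.of_nonneg_of_le (fun x => div_nonneg (abs_nonneg _) (hW x).le)
      fun x => div_le_div_of_nonneg_right (hB x y z) (hW x).le
  exact (div_le_iff₀ (hW x)).mp <| hs.le_tsum x fun x' _ => div_nonneg (abs_nonneg _) (hW x').le

theorem exists_pos_ratioDist_map_lt_of_abs_sub_le (hW : ∀ x, 0 < W x) {B : α → ℝ}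
    (hB : ∀ x y z, |H x y - H x z| ≤ B x) (hBW : Summable fun x => B x / W x) {T : β → β}
    {K : α → ℝ} (hK : ∀ x, 0 ≤ K x)
    (hT : ∀ x y z, |H x (T y) - H x (T z)| ≤ K x * ratioDist H W y z) :
    ∀ ε > (0 : ℝ), ∃ δ > (0 : ℝ), ∀ y z, ratioDist H W y z < δ →
      ratioDist H W (T y) (T z) < ε := by
  intro ε hε
  obtain ⟨δ, hδ, h⟩ := exists_pos_forall_tsum_lt_of_le_mul
    (D := fun p : β × β => ratioDist H W p.1 p.2)
    (a := fun p x => |H x (T p.1) - H x (T p.2)| / W x) (K := fun x => K x / W x) hBW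
    (fun _ x => div_nonneg (abs_nonneg _) (hW x).le)
    (fun _ x => div_le_div_of_nonneg_right (hB _ _ _) (hW x).le)
    (fun x => div_nonneg (hK x) (hW x).le)
    (fun p x => by
      rw [div_mul_eq_mul_div]
      exact div_le_div_of_nonneg_right (hT x p.1 p.2) (hW x).le) ε hε
  exact ⟨δ, hδ, fun y z => h (y, z)⟩

theorem summable_div_mul_two_pow {C : α → ℝ} (hC : ∀ x, C x ≠ 0) {φ : α → ℕ}
    (hφ : Function.Injective φ) : Summable fun x => C x / (C x * 2 ^ φ x) :=
  (summable_geometric_two.comp_injective hφ).congr fun x => by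
    simp only [Function.comp, one_div, inv_pow]
    field_simp [hC x]

end RatioDist

section RatioLimit

variable {G : Type*} [Group G]

/-- The strong ratio limit property of the walk with convolution powers `ν`, with kernel `H`. -/
def IsRatioLimit (ν : ℕ → G → ℝ) (H : G → G → ℝ) : Prop :=
  ∀ x y : G, Tendsto (fun m : ℕ => ν m (x⁻¹ * y) / ν m y) atTop (𝓝 (H x y))

variable {ν : ℕ → G → ℝ} {H : G → G → ℝ}

theorem IsRatioLimit.apply_inv_mul (hH : IsRatioLimit ν H) {g w : G}
    (hgw : ∀ᶠ m in atTop, ν m (g * w) ≠ 0) (x : G) :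
    H (g⁻¹ * x) w = H x (g * w) * H g⁻¹ w := by
  have hprod := (hH x (g * w)).mul (hH g⁻¹ w)
  refine tendsto_nhds_unique (hH (g⁻¹ * x) w) (hprod.congr' ?_)
  filter_upwards [hgw] with m hm
  rw [inv_inv, mul_inv_rev, inv_inv, mul_assoc, div_mul_div_cancel₀ hm]

theorem IsRatioLimit.abs_sub_apply_mul_le (hH : IsRatioLimit ν H)
    (hν : ∀ y, ∀ᶠ m in atTop, ν m y ≠ 0) {c C : G → ℝ} (hc : ∀ x, 0 < c x)
    (hcH : ∀ x y, c x ≤ H x y) (hHC : ∀ x y, H x y ≤ C x) (g x y z : G) :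
    |H x (g * y) - H x (g * z)| ≤
      (C g⁻¹ * |H (g⁻¹ * x) y - H (g⁻¹ * x) z| + C (g⁻¹ * x) * |H g⁻¹ y - H g⁻¹ z|) /
        c g⁻¹ ^ 2 := by
  have hquot : ∀ w, H x (g * w) = H (g⁻¹ * x) w / H g⁻¹ w := fun w =>
    (eq_div_of_mul_eq ((hc g⁻¹).trans_le (hcH g⁻¹ w)).ne'
      (hH.apply_inv_mul (hν (g * w)) x).symm)
  rw [hquot, hquot]
  exact abs_div_sub_div_le (hc g⁻¹) (hcH _ _) (hcH _ _) (hHC _ _)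
    ((hc _).le.trans (hcH _ _)) (hHC _ _)

end RatioLimit

theorem stmt13_general {G : Type*} [Group G]
    (ν : ℕ → G → ℝ)
(hev : ∀ y : G, ∃ m₀ : ℕ, ∀ m ≥ m₀, 0 < ν m y)
(H : G → G → ℝ)
    (hH : ∀ x y : G, Tendsto (fun m : ℕ => ν m (x⁻¹ * y) / ν m y) atTop (𝓝 (H x y)))
    (c C : G → ℝ) (hc : ∀ x : G, 0 < c x)
    (hcH : ∀ x y : G, c x ≤ H x y) (hHC : ∀ x y : G, H x y ≤ C x)
    (φ : G → ℕ) (hφ : Function.Bijective φ) :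
    ∀ g : G, ∀ ε > (0 : ℝ), ∃ δ > (0 : ℝ), ∀ y z : G,
      (∑' x : G, |H x y - H x z| / (C x * 2 ^ φ x)) < δ →
        (∑' x : G, |H x (g * y) - H x (g * z)| / (C x * 2 ^ φ x)) < ε := by
  intro g
  set W : G → ℝ := fun x => C x * 2 ^ φ x
  have hC : ∀ x, 0 < C x := fun x => (hc x).trans_le ((hcH x x).trans (hHC x x))
  have hW : ∀ x, 0 < W x := fun x => mul_pos (hC x) (by positivity)
  have hB : ∀ x y z, |H x y - H x z| ≤ C x := fun x y z =>
    abs_sub_le_of_nonneg_of_le ((hc x).le.trans (hcH x y)) (hHC x y)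
      ((hc x).le.trans (hcH x z)) (hHC x z)
  have hBW := summable_div_mul_two_pow (fun x => (hC x).ne') hφ.injective
  have hν : ∀ y, ∀ᶠ m in atTop, ν m y ≠ 0 := fun y =>
    (eventually_atTop.2 (hev y)).mono fun _ h => h.ne'
  refine exists_pos_ratioDist_map_lt_of_abs_sub_le hW hB hBW (T := (g * ·))
    (K := fun x => (C g⁻¹ * W (g⁻¹ * x) + C (g⁻¹ * x) * W g⁻¹) / c g⁻¹ ^ 2)
    (fun x => div_nonneg (add_nonneg (mul_nonneg (hC _).le (hW _).le)
      (mul_nonneg (hC _).le (hW _).le)) (sq_nonneg _))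
    fun x y z => ?_
  calc |H x (g * y) - H x (g * z)|
      ≤ (C g⁻¹ * |H (g⁻¹ * x) y - H (g⁻¹ * x) z| + C (g⁻¹ * x) * |H g⁻¹ y - H g⁻¹ z|) /
          c g⁻¹ ^ 2 := IsRatioLimit.abs_sub_apply_mul_le hH hν hc hcH hHC g x y z
    _ ≤ (C g⁻¹ * (ratioDist H W y z * W (g⁻¹ * x)) +
          C (g⁻¹ * x) * (ratioDist H W y z * W g⁻¹)) / c g⁻¹ ^ 2 := by
        have hcoord := abs_sub_le_ratioDist_mul hW hB hBW
        gcongr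
        exacts [(hC _).le, hcoord _ _ _, (hC _).le, hcoord _ _ _]
    _ = _ := by ring

/-- left translation is uniformly continuous with respect to the metric
defining the ratio-limit space. -/
theorem stmt13 {G : Type*} [Group G] [Countable G]
(μ : G → ℝ) (hμnn : ∀ g : G, 0 ≤ μ g)
    (hμfin : (Function.support μ).Finite)
    (hμgen : Subsemigroup.closure (Function.support μ) = ⊤)
    (hμsum : ∑ᶠ g : G, μ g = 1)
    (ν : ℕ → G → ℝ)
    (hν0 : ∀ x : G, ν 0 x = if x = 1 then 1 else 0)
    (hνs : ∀ (m : ℕ) (x : G), ν (m + 1) x = ∑ᶠ g : G, ν m g * μ (g⁻¹ * x))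
(hev : ∀ y : G, ∃ m₀ : ℕ, ∀ m ≥ m₀, 0 < ν m y)
(H : G → G → ℝ)
    (hH : ∀ x y : G, Tendsto (fun m : ℕ => ν m (x⁻¹ * y) / ν m y) atTop (𝓝 (H x y)))
    (hHpos : ∀ x y : G, 0 < H x y)
    (c C : G → ℝ) (hc : ∀ x : G, 0 < c x)
    (hcH : ∀ x y : G, c x ≤ H x y) (hHC : ∀ x y : G, H x y ≤ C x)
    (φ : G → ℕ) (hφ : Function.Bijective φ) :
    ∀ g : G, ∀ ε > (0 : ℝ), ∃ δ > (0 : ℝ), ∀ y z : G,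
      (∑' x : G, |H x y - H x z| / (C x * 2 ^ φ x)) < δ →
        (∑' x : G, |H x (g * y) - H x (g * z)| / (C x * 2 ^ φ x)) < ε :=
  stmt13_general ν hev H hH c C hc hcH hHC φ hφ
end

section
/- For n ∈ ℕ and i, j ∈ G with μ^{*n}(i⁻¹j) > 0, let S^{(n)}_{i,j} be a bounded linear operator on the Fock space ℓ²(I) acting on basis vectors by S^{(n)}_{i,j} e^{(m)}_{j',k} = √(μ^{*n}(i⁻¹j)·μ^{*m}(j⁻¹k)/μ^{*(n+m)}(i⁻¹k))·e^{(n+m)}_{i,k} if j' = j, and S^{(n)}_{i,j} e^{(m)}_{j',k} = 0 if j' ≠ j. Then for every x ∈ G, the operator S^{(0)}_{x,x} − ∑_{y : μ(x⁻¹y) > 0} S^{(1)}_{x,y}·(S^{(1)}_{x,y})* (a finite sum over the finitely many y with μ(x⁻¹y) > 0, and * denoting the Hilbert space adjoint) equals the orthogonal projection of ℓ²(I) onto the one-dimensional span of the basis vector e^{(0)}_{x,x}. -/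
/-!
On a basis vector e^{(m)}_{j,k}, the operator S^{(0)}_{x,x} is the identity if j = x and zero
otherwise, while S^{(1)}_{x,y} (S^{(1)}_{x,y})* vanishes unless j = x and m ≥ 1, in which case it
multiplies e^{(m)}_{x,k} by μ(x⁻¹y) μ^{*(m-1)}(y⁻¹k) / μ^{*m}(x⁻¹k). Summed over y these factors
give 1, because μ^{*m} = μ * μ^{*(m-1)}. Hence the difference fixes e^{(0)}_{x,x} and kills every
other basis vector, which is what the projection onto ℝ e^{(0)}_{x,x} does.

The convolution powers are the coefficients of the powers of μ in the group algebra ℝ[G], whose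
associativity provides the identity μ^{*m} = μ * μ^{*(m-1)}, although the powers are defined by
convolving with μ on the right.
-/

open Filter Topology
open scoped Classical RealInnerProductSpace

noncomputable section

namespace MonoidAlgebra

variable {G : Type*} [Group G] {a b : MonoidAlgebra ℝ G}

lemma coeff_mul_nonneg (ha : ∀ g, 0 ≤ a.coeff g) (hb : ∀ g, 0 ≤ b.coeff g) (g : G) :
    0 ≤ (a * b).coeff g := by
  rw [coeff_mul_apply_left]
  exact Finset.sum_nonneg fun h _ => mul_nonneg (ha h) (hb _)

lemma coeff_pow_nonneg (ha : ∀ g, 0 ≤ a.coeff g) (n : ℕ) (g : G) : 0 ≤ (a ^ n).coeff g := by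
  induction n generalizing g with
  | zero => rw [pow_zero, one_def, coeff_single]; exact Finsupp.single_nonneg.2 zero_le_one g
  | succ n ih => rw [pow_succ]; exact coeff_mul_nonneg ih ha g

lemma coeff_mul_mul_pos (ha : ∀ g, 0 ≤ a.coeff g) (hb : ∀ g, 0 ≤ b.coeff g) {g h : G}
    (hg : 0 < a.coeff g) (hh : 0 < b.coeff h) : 0 < (a * b).coeff (g * h) := by
  rw [coeff_mul_apply_left]
  calc 0 < a.coeff g * b.coeff (g⁻¹ * (g * h)) := by rw [inv_mul_cancel_left]; exact mul_pos hg hh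
    _ ≤ _ := Finset.single_le_sum (f := fun k => a.coeff k * b.coeff (k⁻¹ * (g * h)))
        (fun k _ => mul_nonneg (ha k) (hb _)) (Finsupp.mem_support_iff.2 hg.ne')

lemma coeff_mul_inv_mul_eq_sum (ha : ∀ g, 0 ≤ a.coeff g) {x : G} {Y : Finset G}
    (hY : ∀ y, y ∈ Y ↔ 0 < a.coeff (x⁻¹ * y)) (b : MonoidAlgebra ℝ G) (k : G) :
    (a * b).coeff (x⁻¹ * k) = ∑ y ∈ Y, a.coeff (x⁻¹ * y) * b.coeff (y⁻¹ * k) := by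
  have hsupp : ∀ g, g ∈ a.coeff.support ↔ 0 < a.coeff g := fun g =>
    Finsupp.mem_support_iff.trans (LE.le.lt_iff_ne' (ha g)).symm
  rw [coeff_mul_apply_left, Finsupp.sum]
  refine Finset.sum_nbij' (x * ·) (x⁻¹ * ·) ?_ ?_ ?_ ?_ ?_ <;> simp [hY, hsupp, mul_assoc]

lemma eq_coeff_pow_of_convolution {ν : ℕ → G → ℝ} (a : MonoidAlgebra ℝ G)
    (hν0 : ∀ x : G, ν 0 x = if x = 1 then 1 else 0)
    (hνs : ∀ (m : ℕ) (x : G), ν (m + 1) x = ∑ᶠ g : G, ν m g * a.coeff (g⁻¹ * x)) :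
    ∀ m, ν m = ⇑(a ^ m).coeff := by
  intro m
  induction m with
  | zero => funext x; simp [hν0, one_def, Finsupp.single_apply, eq_comm]
  | succ m ih =>
    funext x
    rw [hνs, pow_succ, coeff_mul_apply_left, ih, Finsupp.sum]
    refine finsum_eq_sum_of_support_subset _ fun g hg => ?_
    exact Finsupp.mem_support_iff.2 (left_ne_zero_of_mul hg)

end MonoidAlgebra

namespace lp

variable {ι κ : Type*}

lemma inner_single_one_left (i : ι) (f : ℓ²(ι, ℝ)) : ⟪lp.single 2 i (1 : ℝ), f⟫ = f i := by
  simp [lp.inner_single_left]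

lemma adjoint_single_one_eq_smul (T : ℓ²(ι, ℝ) →L[ℝ] ℓ²(κ, ℝ)) {p : ι} {q : κ} {c : ℝ}
    (hp : T (lp.single 2 p 1) = c • lp.single 2 q 1)
    (hne : ∀ p' ≠ p, ⟪T (lp.single 2 p' 1), lp.single 2 q 1⟫ = 0) :
    T.adjoint (lp.single 2 q 1) = c • lp.single 2 p 1 := by
  ext p'
  rw [← inner_single_one_left, ContinuousLinearMap.adjoint_inner_right]
  by_cases h : p' = p
  · subst h
    rw [hp, real_inner_smul_left, inner_single_one_left]
    simp
  · simp [hne p' h, h]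

lemma adjoint_single_one_eq_zero (T : ℓ²(ι, ℝ) →L[ℝ] ℓ²(κ, ℝ)) {q : κ}
    (h : ∀ p, ⟪T (lp.single 2 p 1), lp.single 2 q 1⟫ = 0) : T.adjoint (lp.single 2 q 1) = 0 := by
  ext p
  rw [← inner_single_one_left, ContinuousLinearMap.adjoint_inner_right, h]
  rfl

end lp

section FockShift

variable {G : Type*} [Group G] {ν : ℕ → G → ℝ} {a : MonoidAlgebra ℝ G}

lemma inner_fockVec_mk_fockVec_mk {p q : ℕ × G × G} (hp : 0 < ν p.1 (p.2.1⁻¹ * p.2.2))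
    (hq : 0 < ν q.1 (q.2.1⁻¹ * q.2.2)) :
    ⟪fockVec ν ⟨p, hp⟩, fockVec ν ⟨q, hq⟩⟫ = if p = q then 1 else 0 := by
  have h (p q : FockIndex ν) : ⟪fockVec ν p, fockVec ν q⟫ = if p = q then 1 else 0 := by
    simp [fockVec, lp.inner_single_one_left, Pi.single_apply]
  exact (h _ _).trans (if_congr Subtype.ext_iff rfl rfl)

lemma one_add_pos_of_coeff_pos (hν : ∀ m, ν m = ⇑(a ^ m).coeff) (ha : ∀ g, 0 ≤ a.coeff g)
    {x y c : G} {m : ℕ} (hy : 0 < a.coeff (x⁻¹ * y)) (hc : 0 < ν m (y⁻¹ * c)) :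
    0 < ν (1 + m) (x⁻¹ * c) := by
  rw [hν] at hc ⊢
  rw [pow_add, pow_one, show x⁻¹ * c = x⁻¹ * y * (y⁻¹ * c) by group]
  exact MonoidAlgebra.coeff_mul_mul_pos ha (MonoidAlgebra.coeff_pow_nonneg ha m) hy hc

lemma eq_of_zero_pos (hν : ∀ m, ν m = ⇑(a ^ m).coeff) {j k : G} (h : 0 < ν 0 (j⁻¹ * k)) :
    j = k := by
  rw [hν, pow_zero, MonoidAlgebra.one_def, MonoidAlgebra.coeff_single, Finsupp.single_apply] at h
  split_ifs at h with h1
  exacts [inv_mul_eq_one.1 h1.symm, (lt_irrefl 0 h).elim]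

def IsFockShiftFamily (ν : ℕ → G → ℝ) (S : ℕ → G → G → (FockSpace ν →L[ℝ] FockSpace ν)) :
    Prop :=
  ∀ (n : ℕ) (i j : G), 0 < ν n (i⁻¹ * j) →
    ∀ (m : ℕ) (j' k : G) (h : 0 < ν m (j'⁻¹ * k)),
      (j' = j → ∀ h' : 0 < ν (n + m) (i⁻¹ * k),
        S n i j (fockVec ν ⟨(m, j', k), h⟩) =
          Real.sqrt (ν n (i⁻¹ * j) * ν m (j⁻¹ * k) / ν (n + m) (i⁻¹ * k)) •
            fockVec ν ⟨(n + m, i, k), h'⟩) ∧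
      (j' ≠ j → S n i j (fockVec ν ⟨(m, j', k), h⟩) = 0)

lemma inner_fockVec_smul_fockVec {p q : ℕ × G × G} (hp : 0 < ν p.1 (p.2.1⁻¹ * p.2.2))
    (hq : 0 < ν q.1 (q.2.1⁻¹ * q.2.2)) :
    ⟪fockVec ν ⟨p, hp⟩, fockVec ν ⟨q, hq⟩⟫ • fockVec ν ⟨p, hp⟩ =
      if q = p then fockVec ν ⟨q, hq⟩ else 0 := by
  rw [inner_fockVec_mk_fockVec_mk]
  by_cases h : q = p
  · subst h
    rw [if_pos rfl, if_pos rfl, one_smul]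
  · rw [if_neg (Ne.symm h), if_neg h, zero_smul]

lemma ext_fockVec {E : Type*} [AddCommMonoid E] [Module ℝ E] [TopologicalSpace E] [T2Space E]
    {T U : FockSpace ν →L[ℝ] E}
    (h : ∀ m j k (hq : 0 < ν m (j⁻¹ * k)),
      T (fockVec ν ⟨(m, j, k), hq⟩) = U (fockVec ν ⟨(m, j, k), hq⟩)) :
    T = U :=
  lp.ext_continuousLinearMap ENNReal.ofNat_ne_top fun ⟨⟨m, j, k⟩, hq⟩ =>
    ContinuousLinearMap.ext_ring (h m j k hq)

variable {S : ℕ → G → G → (FockSpace ν →L[ℝ] FockSpace ν)}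

namespace IsFockShiftFamily

lemma zero_apply_fockVec (hS : IsFockShiftFamily ν S) (h01 : ν 0 1 = 1) {x : G}
    (hx : 0 < ν 0 (x⁻¹ * x)) (q : FockIndex ν) :
    S 0 x x (fockVec ν q) = if q.1.2.1 = x then fockVec ν q else 0 := by
  obtain ⟨⟨m, j, k⟩, hq⟩ := q
  by_cases hj : j = x
  · subst hj
    have hq' : 0 < ν (0 + m) (j⁻¹ * k) := by rwa [zero_add]
    have hidx : (⟨(0 + m, j, k), hq'⟩ : FockIndex ν) = ⟨(m, j, k), hq⟩ := Subtype.ext (by simp)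
    rw [if_pos rfl, (hS 0 j j hx m j k hq).1 rfl hq', hidx, inv_mul_cancel, h01, zero_add,
      one_mul, div_self hq.ne', Real.sqrt_one, one_smul]
  · rw [if_neg hj]
    exact (hS 0 x x hx m j k hq).2 hj

lemma one_apply_fockVec (hS : IsFockShiftFamily ν S) (hν : ∀ m, ν m = ⇑(a ^ m).coeff)
    (ha : ∀ g, 0 ≤ a.coeff g) {x y : G} (hy : 0 < a.coeff (x⁻¹ * y)) {m : ℕ} {c : G}
    (hc : 0 < ν m (y⁻¹ * c)) :
    S 1 x y (fockVec ν ⟨(m, y, c), hc⟩) =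
      Real.sqrt (a.coeff (x⁻¹ * y) * ν m (y⁻¹ * c) / ν (1 + m) (x⁻¹ * c)) •
        fockVec ν ⟨(1 + m, x, c), one_add_pos_of_coeff_pos hν ha hy hc⟩ := by
  have hν1 : ν 1 = ⇑a.coeff := by rw [hν, pow_one]
  rw [(hS 1 x y (by rwa [hν1]) m y c hc).1 rfl, hν1]

lemma one_apply_fockVec_of_ne (hS : IsFockShiftFamily ν S) (hν : ∀ m, ν m = ⇑(a ^ m).coeff)
    {x y : G} (hy : 0 < a.coeff (x⁻¹ * y)) (p : FockIndex ν) (hp : p.1.2.1 ≠ y) :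
    S 1 x y (fockVec ν p) = 0 :=
  (hS 1 x y (by rwa [hν, pow_one]) _ _ _ p.2).2 hp

lemma adjoint_one_fockVec (hS : IsFockShiftFamily ν S) (hν : ∀ m, ν m = ⇑(a ^ m).coeff)
    (ha : ∀ g, 0 ≤ a.coeff g) {x y : G} (hy : 0 < a.coeff (x⁻¹ * y)) {m : ℕ} {k : G}
    (hq : 0 < ν (1 + m) (x⁻¹ * k)) (hk : 0 < ν m (y⁻¹ * k)) :
    (S 1 x y).adjoint (fockVec ν ⟨(1 + m, x, k), hq⟩) =
      Real.sqrt (a.coeff (x⁻¹ * y) * ν m (y⁻¹ * k) / ν (1 + m) (x⁻¹ * k)) •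
        fockVec ν ⟨(m, y, k), hk⟩ := by
  refine lp.adjoint_single_one_eq_smul _ (hS.one_apply_fockVec hν ha hy hk) fun p hne => ?_
  change ⟪S 1 x y (fockVec ν p), fockVec ν ⟨(1 + m, x, k), hq⟩⟫ = 0
  by_cases hp : p.1.2.1 = y
  · obtain ⟨⟨m', j', k'⟩, hp'⟩ := p
    obtain rfl : j' = y := hp
    rw [hS.one_apply_fockVec hν ha hy hp', real_inner_smul_left, inner_fockVec_mk_fockVec_mk,
      if_neg, mul_zero]
    simp only [Prod.mk.injEq, add_right_inj, not_and]
    rintro rfl - rfl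
    exact hne rfl
  · rw [hS.one_apply_fockVec_of_ne hν hy p hp, inner_zero_left]

lemma adjoint_one_fockVec_eq_zero (hS : IsFockShiftFamily ν S) (hν : ∀ m, ν m = ⇑(a ^ m).coeff)
    (ha : ∀ g, 0 ≤ a.coeff g) {x y : G} (hy : 0 < a.coeff (x⁻¹ * y)) {m : ℕ} {j k : G}
    (hq : 0 < ν m (j⁻¹ * k)) (hvan : ∀ m', m = 1 + m' → j = x → ¬0 < ν m' (y⁻¹ * k)) :
    (S 1 x y).adjoint (fockVec ν ⟨(m, j, k), hq⟩) = 0 := by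
  refine lp.adjoint_single_one_eq_zero _ fun p => ?_
  change ⟪S 1 x y (fockVec ν p), fockVec ν ⟨(m, j, k), hq⟩⟫ = 0
  by_cases hp : p.1.2.1 = y
  · obtain ⟨⟨m', j', k'⟩, hp'⟩ := p
    obtain rfl : j' = y := hp
    rw [hS.one_apply_fockVec hν ha hy hp', real_inner_smul_left, inner_fockVec_mk_fockVec_mk,
      if_neg, mul_zero]
    simp only [Prod.mk.injEq, not_and]
    rintro rfl rfl rfl
    exact hvan m' rfl rfl hp'
  · rw [hS.one_apply_fockVec_of_ne hν hy p hp, inner_zero_left]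

lemma one_comp_adjoint_fockVec (hS : IsFockShiftFamily ν S) (hν : ∀ m, ν m = ⇑(a ^ m).coeff)
    (ha : ∀ g, 0 ≤ a.coeff g) {x y : G} (hy : 0 < a.coeff (x⁻¹ * y)) {m : ℕ} {k : G}
    (hq : 0 < ν (1 + m) (x⁻¹ * k)) :
    (S 1 x y ∘L (S 1 x y).adjoint) (fockVec ν ⟨(1 + m, x, k), hq⟩) =
      (a.coeff (x⁻¹ * y) * ν m (y⁻¹ * k) / ν (1 + m) (x⁻¹ * k)) •
        fockVec ν ⟨(1 + m, x, k), hq⟩ := by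
  have hν_nonneg : ∀ n g, 0 ≤ ν n g := fun n g => hν n ▸ MonoidAlgebra.coeff_pow_nonneg ha n g
  rw [ContinuousLinearMap.comp_apply]
  by_cases hk : 0 < ν m (y⁻¹ * k)
  · rw [hS.adjoint_one_fockVec hν ha hy hq hk, map_smul, hS.one_apply_fockVec hν ha hy hk,
      smul_smul, Real.mul_self_sqrt (by have := hν_nonneg; positivity)]
  · have hk0 : ν m (y⁻¹ * k) = 0 := le_antisymm (not_lt.1 hk) (hν_nonneg _ _)
    rw [hS.adjoint_one_fockVec_eq_zero hν ha hy hq (fun m' hm _ => by rwa [← add_left_cancel hm]),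
      map_zero, hk0, mul_zero, zero_div, zero_smul]

lemma sub_sum_comp_adjoint_fockVec (hS : IsFockShiftFamily ν S)
    (hν : ∀ m, ν m = ⇑(a ^ m).coeff) (ha : ∀ g, 0 ≤ a.coeff g) {x : G} (hx : 0 < ν 0 (x⁻¹ * x))
    {Y : Finset G} (hY : ∀ y, y ∈ Y ↔ 0 < a.coeff (x⁻¹ * y)) {m : ℕ} {j k : G}
    (hq : 0 < ν m (j⁻¹ * k)) :
    (S 0 x x - ∑ y ∈ Y, S 1 x y ∘L (S 1 x y).adjoint) (fockVec ν ⟨(m, j, k), hq⟩) =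
      if (m, j, k) = (0, x, x) then fockVec ν ⟨(m, j, k), hq⟩ else 0 := by
  have h01 : ν 0 1 = 1 := by rw [hν, pow_zero, MonoidAlgebra.coeff_one_one]
  rw [sub_apply, sum_apply, hS.zero_apply_fockVec h01 hx ⟨(m, j, k), hq⟩]
  by_cases hsucc : j = x ∧ ∃ m', m = 1 + m'
  · obtain ⟨rfl, m, rfl⟩ := hsucc
    have hsum : ∑ y ∈ Y, a.coeff (j⁻¹ * y) * ν m (y⁻¹ * k) / ν (1 + m) (j⁻¹ * k) = 1 := by
      rw [← Finset.sum_div, div_eq_one_iff_eq hq.ne', hν, hν, pow_add, pow_one,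
        MonoidAlgebra.coeff_mul_inv_mul_eq_sum ha hY]
    rw [Finset.sum_congr rfl fun y hy => hS.one_comp_adjoint_fockVec hν ha ((hY y).1 hy) hq,
      ← Finset.sum_smul, hsum, one_smul, if_pos rfl, sub_self, if_neg]
    simp
  · have hvan : ∀ y ∈ Y, (S 1 x y ∘L (S 1 x y).adjoint) (fockVec ν ⟨(m, j, k), hq⟩) = 0 :=
      fun y hy => by
        rw [ContinuousLinearMap.comp_apply, hS.adjoint_one_fockVec_eq_zero hν ha ((hY y).1 hy) hq
          (fun m' hm hj _ => hsucc ⟨hj, m', hm⟩), map_zero]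
    rw [Finset.sum_eq_zero hvan, sub_zero]
    by_cases hj : j = x
    · subst hj
      obtain rfl : m = 0 := by
        by_contra hm
        exact hsucc ⟨rfl, m - 1, by omega⟩
      obtain rfl := eq_of_zero_pos hν hq
      rw [if_pos rfl, if_pos rfl]
    · rw [if_neg hj, if_neg (by simp [hj])]

end IsFockShiftFamily

end FockShift

theorem stmt16_general {G : Type*} [Group G]
(μ : G → ℝ) (hμnn : ∀ g : G, 0 ≤ μ g)
    (hμfin : (Function.support μ).Finite)
    (ν : ℕ → G → ℝ)
    (hν0 : ∀ x : G, ν 0 x = if x = 1 then 1 else 0)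
    (hνs : ∀ (m : ℕ) (x : G), ν (m + 1) x = ∑ᶠ g : G, ν m g * μ (g⁻¹ * x))
    (S : ℕ → G → G → (FockSpace ν →L[ℝ] FockSpace ν))
    (hS : ∀ (n : ℕ) (i j : G), 0 < ν n (i⁻¹ * j) →
      ∀ (m : ℕ) (j' k : G) (h : 0 < ν m (j'⁻¹ * k)),
        (j' = j → ∀ h' : 0 < ν (n + m) (i⁻¹ * k),
          S n i j (fockVec ν ⟨(m, j', k), h⟩) =
            Real.sqrt (ν n (i⁻¹ * j) * ν m (j⁻¹ * k) / ν (n + m) (i⁻¹ * k)) •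
              fockVec ν ⟨(n + m, i, k), h'⟩) ∧
        (j' ≠ j → S n i j (fockVec ν ⟨(m, j', k), h⟩) = 0)) :
    ∀ (x : G) (hx : 0 < ν 0 (x⁻¹ * x)) (v : FockSpace ν),
      (S 0 x x -
          ∑ᶠ y ∈ {y : G | 0 < μ (x⁻¹ * y)},
            S 1 x y ∘L ContinuousLinearMap.adjoint (S 1 x y)) v =
        ⟪fockVec ν ⟨(0, x, x), hx⟩, v⟫ • fockVec ν ⟨(0, x, x), hx⟩ := by
  intro x hx v
  obtain ⟨a, rfl⟩ : ∃ a : MonoidAlgebra ℝ G, ⇑a.coeff = μ :=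
    ⟨.ofCoeff (Finsupp.ofSupportFinite μ hμfin), Finsupp.ofSupportFinite_coe⟩
  have hν := MonoidAlgebra.eq_coeff_pow_of_convolution a hν0 hνs
  have hYfin : {y | 0 < a.coeff (x⁻¹ * y)}.Finite :=
    (a.coeff.support.finite_toSet.preimage (mul_right_injective x⁻¹).injOn).subset
      fun y hy => Finsupp.mem_support_iff.2 (ne_of_gt hy)
  rw [finsum_mem_eq_finite_toFinset_sum _ hYfin]
  suffices h : S 0 x x - ∑ y ∈ hYfin.toFinset, S 1 x y ∘L (S 1 x y).adjoint =
      (innerSL ℝ (fockVec ν ⟨(0, x, x), hx⟩)).smulRight (fockVec ν ⟨(0, x, x), hx⟩) by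
    rw [h]; rfl
  have hS' : IsFockShiftFamily ν S := hS
  refine ext_fockVec fun m j k hq => ?_
  rw [hS'.sub_sum_comp_adjoint_fockVec hν hμnn hx (by simp) hq,
    ContinuousLinearMap.smulRight_apply, innerSL_apply_apply, inner_fockVec_smul_fockVec]

/-- S^{(0)}_{x,x} minus the finite sum of the range projections
S^{(1)}_{x,y}(S^{(1)}_{x,y})* over the y with μ(x⁻¹y) > 0 is the orthogonal projection
onto the one-dimensional span of the basis vector e^{(0)}_{x,x}. -/
theorem stmt16 {G : Type*} [Group G] [Countable G]
(μ : G → ℝ) (hμnn : ∀ g : G, 0 ≤ μ g)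
    (hμfin : (Function.support μ).Finite)
    (hμgen : Subsemigroup.closure (Function.support μ) = ⊤)
    (hμsum : ∑ᶠ g : G, μ g = 1)
    (ν : ℕ → G → ℝ)
    (hν0 : ∀ x : G, ν 0 x = if x = 1 then 1 else 0)
    (hνs : ∀ (m : ℕ) (x : G), ν (m + 1) x = ∑ᶠ g : G, ν m g * μ (g⁻¹ * x))
    (S : ℕ → G → G → (FockSpace ν →L[ℝ] FockSpace ν))
    (hS : ∀ (n : ℕ) (i j : G), 0 < ν n (i⁻¹ * j) →
      ∀ (m : ℕ) (j' k : G) (h : 0 < ν m (j'⁻¹ * k)),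
        (j' = j → ∀ h' : 0 < ν (n + m) (i⁻¹ * k),
          S n i j (fockVec ν ⟨(m, j', k), h⟩) =
            Real.sqrt (ν n (i⁻¹ * j) * ν m (j⁻¹ * k) / ν (n + m) (i⁻¹ * k)) •
              fockVec ν ⟨(n + m, i, k), h'⟩) ∧
        (j' ≠ j → S n i j (fockVec ν ⟨(m, j', k), h⟩) = 0)) :
    ∀ (x : G) (hx : 0 < ν 0 (x⁻¹ * x)) (v : FockSpace ν),
      (S 0 x x -
          ∑ᶠ y ∈ {y : G | 0 < μ (x⁻¹ * y)},
            S 1 x y ∘L ContinuousLinearMap.adjoint (S 1 x y)) v =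
        ⟪fockVec ν ⟨(0, x, x), hx⟩, v⟫ • fockVec ν ⟨(0, x, x), hx⟩ :=
  stmt16_general μ hμnn hμfin ν hν0 hνs S hS
end
end
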